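/- arXiv:1709.09734 — 7 statements merged into one kernel-verified Lean document; each statement's English description precedes it below -/
import Mathlib

section
/- Let L be a finite bounded distributive lattice with minimum O and maximum 1, and let C : O = c_0 < c_1 < … < c_N = 1 be a maximal chain in L. Then for each i = 1, …, N the set Spec(c_i) \ Spec(c_{i−1}) contains exactly one element m_i; moreover, setting m_0 = O, the list m_0, m_1, …, m_N enumerates all of J(L), and this enumeration is order-preserving, i.e. m_i < m_j implies i < j. -/
/-- An element `m` of a lattice is join-irreducible (with the convention that
the minimum is join-irreducible) if `m = a ⊔ b` implies `m = a` or `m = b`. -/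
def JoinIrred {L : Type*} [SemilatticeSup L] (m : L) : Prop :=
  ∀ a b : L, m = a ⊔ b → m = a ∨ m = b

lemma joinIrred_bot {L : Type*} [SemilatticeSup L] [OrderBot L] : JoinIrred (⊥ : L) := by
  intro a b h
  left
  have : a ≤ ⊥ := h ▸ le_sup_left
  exact (le_bot_iff.mp this).symm

lemma spec_le {L : Type*} [Lattice L] [Finite L] {a : L} :
    ∀ b : L, (∀ m : L, JoinIrred m → m ≤ b → m ≤ a) → b ≤ a := by
  intro b
  induction b using WellFoundedLT.induction with
  | ind b ih =>
    intro h
    by_cases hb : JoinIrred b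
    · exact h b hb le_rfl
    · simp only [JoinIrred, not_forall] at hb
      obtain ⟨x, y, hxy, hne⟩ := hb
      push_neg at hne
      have hx : x < b := lt_of_le_of_ne (hxy ▸ le_sup_left) fun e => hne.1 e.symm
      have hy : y < b := lt_of_le_of_ne (hxy ▸ le_sup_right) fun e => hne.2 e.symm
      have h1 := ih x hx (fun m hm hmx => h m hm (hmx.trans hx.le))
      have h2 := ih y hy (fun m hm hmy => h m hm (hmy.trans hy.le))
      rw [hxy]
      exact sup_le h1 h2

/-- for a maximal chain `⊥ = c 0 < c 1 < … < c N = ⊤` in a finite bounded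
distributive lattice, each set `Spec (c i) \ Spec (c (i-1))` is a singleton `{m i}`, and
with `m 0 = ⊥` the `m i` enumerate all join-irreducible elements, order-preservingly. -/
theorem stmt0 {L : Type*} [DistribLattice L] [Fintype L] [BoundedOrder L]
    (N : ℕ) (c : ℕ → L)
    (hc0 : c 0 = ⊥) (hcN : c N = ⊤)
    (hmono : ∀ i, i < N → c i < c (i + 1))
    (hmax : IsMaxChain (· ≤ ·) {x : L | ∃ i ≤ N, c i = x}) :
    ∃ m : ℕ → L,
      m 0 = ⊥ ∧
      (∀ i, 1 ≤ i → i ≤ N →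
        {x : L | JoinIrred x ∧ x ≤ c i} \ {x : L | JoinIrred x ∧ x ≤ c (i - 1)}
          = {m i}) ∧
      (∀ i, i ≤ N → ∀ j, j ≤ N → m i = m j → i = j) ∧
      ({x : L | JoinIrred x} = {x : L | ∃ i ≤ N, m i = x}) ∧
      (∀ i, i ≤ N → ∀ j, j ≤ N → m i < m j → i < j) := by
  classical
  -- monotonicity of the chain
  have hmono' : ∀ j k, j ≤ k → k ≤ N → c j ≤ c k := by
    intro j k hjk hkN
    induction k with
    | zero => simp_all
    | succ n ih =>
      rcases Nat.lt_or_ge j (n+1) with h | h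
      · exact (ih (Nat.lt_succ_iff.mp h) (le_of_lt (Nat.lt_of_succ_le hkN))).trans
          (hmono n (Nat.lt_of_succ_le hkN)).le
      · have : j = n + 1 := le_antisymm hjk h
        simp [this]
  have hsmono : ∀ j k, j < k → k ≤ N → c j < c k := fun j k hjk hkN =>
    lt_of_lt_of_le (hmono j (lt_of_lt_of_le hjk hkN)) (hmono' (j+1) k hjk hkN)
  -- covering property
  have hcov : ∀ i, i < N → ∀ x : L, c i < x → x < c (i+1) → False := by
    intro i hiN x h1 h2
    have hxnot : x ∉ {y : L | ∃ j ≤ N, c j = y} := by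
      rintro ⟨j, hj, rfl⟩
      rcases Nat.lt_or_ge j (i+1) with h | h
      · exact absurd (hmono' j i (Nat.lt_succ_iff.mp h) (le_of_lt hiN)) h1.not_ge
      · exact absurd (hmono' (i+1) j h hj) h2.not_ge
    have hchain : IsChain (· ≤ ·) (insert x {y : L | ∃ j ≤ N, c j = y}) := by
      apply hmax.1.insert
      rintro y ⟨j, hj, rfl⟩ _
      rcases Nat.lt_or_ge j (i+1) with h | h
      · exact Or.inr ((hmono' j i (Nat.lt_succ_iff.mp h) (le_of_lt hiN)).trans h1.le)
      · exact Or.inl (h2.le.trans (hmono' (i+1) j h hj))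
    have := hmax.2 hchain (Set.subset_insert _ _)
    exact hxnot (this ▸ Set.mem_insert x _)
  -- the key existence and uniqueness
  have key : ∀ i, i < N → ∃! x : L, JoinIrred x ∧ x ≤ c (i+1) ∧ ¬ x ≤ c i := by
    intro i hiN
    have hex : ∃ x : L, JoinIrred x ∧ x ≤ c (i+1) ∧ ¬ x ≤ c i := by
      by_contra h
      push_neg at h
      have : c (i+1) ≤ c i := spec_le _ (fun m hm hmle => h m hm hmle)
      exact absurd this (hmono i hiN).not_ge
    obtain ⟨x, hx⟩ := hex
    refine ⟨x, hx, ?_⟩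
    -- uniqueness
    have huniq : ∀ u v : L, (JoinIrred u ∧ u ≤ c (i+1) ∧ ¬ u ≤ c i) →
        (JoinIrred v ∧ v ≤ c (i+1) ∧ ¬ v ≤ c i) → u ≤ v := by
      rintro u v ⟨hu, hu1, hu2⟩ ⟨hv, hv1, hv2⟩
      have hsup : c i ⊔ v = c (i+1) := by
        rcases lt_or_eq_of_le (sup_le (hmono i hiN).le hv1 : c i ⊔ v ≤ c (i+1)) with h | h
        · exact absurd h (fun h =>
            hcov i hiN _ (lt_of_le_of_ne le_sup_left (fun e => hv2 (e ▸ le_sup_right))) h)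
        · exact h
      have hdec : u = (u ⊓ c i) ⊔ (u ⊓ v) := by
        rw [← inf_sup_left, hsup]
        exact (inf_eq_left.mpr hu1).symm
      rcases hu _ _ hdec with h | h
      · exact absurd (inf_eq_left.mp h.symm) hu2
      · exact inf_eq_left.mp h.symm
    intro y hy
    exact le_antisymm (huniq y x hy hx) (huniq x y hx hy)
  have key' : ∀ i, 1 ≤ i → i ≤ N → ∃! x : L, JoinIrred x ∧ x ≤ c i ∧ ¬ x ≤ c (i-1) := by
    intro i h1 h2
    have h := key (i-1) (by omega)
    have hi : i - 1 + 1 = i := by omega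
    rwa [hi] at h
  set m : ℕ → L := fun i => if h : 1 ≤ i ∧ i ≤ N then
      (key' i h.1 h.2).exists.choose else ⊥ with hm
  have hmspec : ∀ i, 1 ≤ i → i ≤ N →
      JoinIrred (m i) ∧ m i ≤ c i ∧ ¬ m i ≤ c (i-1) := by
    intro i h1 h2
    have hm_eq : m i = (key' i h1 h2).exists.choose := by
      simp only [hm]
      rw [dif_pos (⟨h1, h2⟩ : 1 ≤ i ∧ i ≤ N)]
    rw [hm_eq]
    exact (key' i h1 h2).exists.choose_spec
  have hm0 : m 0 = ⊥ := by simp [hm]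
  refine ⟨m, hm0, ?_, ?_, ?_, ?_⟩
  · -- singleton
    intro i h1 h2
    ext x
    simp only [Set.mem_diff, Set.mem_setOf_eq, Set.mem_singleton_iff]
    constructor
    · rintro ⟨⟨hxj, hxle⟩, hxn⟩
      have hxn' : ¬ x ≤ c (i-1) := fun h => hxn ⟨hxj, h⟩
      obtain ⟨hj, hle, hnle⟩ := hmspec i h1 h2
      exact (key' i h1 h2).unique ⟨hxj, hxle, hxn'⟩ ⟨hj, hle, hnle⟩
    · rintro rfl
      obtain ⟨hj, hle, hnle⟩ := hmspec i h1 h2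
      exact ⟨⟨hj, hle⟩, fun h => hnle h.2⟩
  · -- injectivity
    intro i hi j hj heq
    by_contra hne
    wlog hlt : i < j generalizing i j
    · exact this j hj i hi heq.symm (Ne.symm hne) (by omega)
    have hj1 : 1 ≤ j := by omega
    obtain ⟨_, _, hnle⟩ := hmspec j hj1 hj
    rcases Nat.eq_zero_or_pos i with rfl | hi1
    · exact hnle (heq ▸ hm0 ▸ bot_le)
    · obtain ⟨_, hle, _⟩ := hmspec i hi1 hi
      exact hnle (heq ▸ hle.trans (hmono' i (j-1) (by omega) (by omega)))
  · -- surjectivity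
    ext x
    simp only [Set.mem_setOf_eq]
    constructor
    · intro hx
      by_cases hbot : x = ⊥
      · exact ⟨0, Nat.zero_le _, by simp [hm0, hbot]⟩
      · have hxN : x ≤ c N := hcN ▸ le_top
        have hexists : ∃ i, x ≤ c i := ⟨N, hxN⟩
        set i := Nat.find hexists with hi
        have hile : x ≤ c i := Nat.find_spec hexists
        have hiN : i ≤ N := Nat.find_min' hexists hxN
        have hi1 : 1 ≤ i := by
          rcases Nat.eq_zero_or_pos i with h0 | h; swap; · exact h
          · exfalso; apply hbot
            have : x ≤ c 0 := h0 ▸ hile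
            rw [hc0] at this
            exact le_bot_iff.mp this
        have hnle : ¬ x ≤ c (i-1) := Nat.find_min hexists (by omega)
        obtain ⟨hj, hle, hnle'⟩ := hmspec i hi1 hiN
        exact ⟨i, hiN, (key' i hi1 hiN).unique ⟨hj, hle, hnle'⟩ ⟨hx, hile, hnle⟩⟩
    · rintro ⟨i, hi, rfl⟩
      rcases Nat.eq_zero_or_pos i with rfl | h1
      · exact hm0 ▸ joinIrred_bot
      · exact (hmspec i h1 hi).1
  · -- order preserving
    intro i hi j hj hlt
    by_contra hge
    push_neg at hge
    rcases Nat.eq_zero_or_pos j with rfl | hj1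
    · exact absurd hlt (by simp [hm0])
    have hij : i ≠ j := fun e => absurd (e ▸ hlt) (lt_irrefl _)
    have hji : j < i := by omega
    have hi1 : 1 ≤ i := by omega
    obtain ⟨_, _, hnlei⟩ := hmspec i hi1 hi
    obtain ⟨_, hlej, _⟩ := hmspec j hj1 hj
    exact hnlei (hlt.le.trans (hlej.trans (hmono' j (i-1) (by omega) (by omega))))
end

section
/- Let L be a finite bounded distributive lattice, and let C : O = c_0 < c_1 < … < c_N = 1 be a maximal chain with associated order-preserving enumeration m_0 = O, m_1, …, m_N of J(L), so that u_{c_j} = y_0 y_1 ⋯ y_j in the Hibi ring A(L) ⊆ ℂ[y_0, …, y_N]. Then the field F := { f/g : f, g ∈ A(L) homogeneous of the same degree, g ≠ 0 } ∪ {0} (the function field of the Hibi variety X_L) is generated over ℂ by the N elements x̂_{c_j} := u_{c_j}/u_O = y_1 y_2 ⋯ y_j, j = 1, …, N; that is, ℂ(X_L) = ℂ(x̂_{c_1}, …, x̂_{c_N}). -/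
open MvPolynomial

-- The Hibi generator `u ℓ = ∏_{i ≤ N, m i ∈ Spec ℓ} y i` attached to an
-- order-preserving enumeration `m` of the join-irreducibles.
open Classical in
noncomputable def hibiGen {L : Type*} [SemilatticeSup L] (N : ℕ) (m : ℕ → L) (ℓ : L) :
    MvPolynomial ℕ ℂ :=
  ∏ i ∈ Finset.range (N + 1), if m i ≤ ℓ then X i else 1

/-- Homogeneity of degree `d` with respect to the grading `deg y 0 = 1`,
`deg y i = 0` for `i ≥ 1`. -/
def IsHomog (f : MvPolynomial ℕ ℂ) (d : ℕ) : Prop := ∀ s ∈ f.support, s 0 = d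

open Classical in
lemma hibiGen_prod {L : Type*} [SemilatticeSup L] (N : ℕ) (m : ℕ → L) (ℓ : L) :
    hibiGen N m ℓ
      = ∏ i ∈ (Finset.range (N+1)).filter (fun i => m i ≤ ℓ), (X i : MvPolynomial ℕ ℂ) :=
  (Finset.prod_filter _ _).symm

lemma prodX_eq (t : Finset ℕ) :
    (∏ i ∈ t, (X i : MvPolynomial ℕ ℂ)) = monomial (∑ i ∈ t, Finsupp.single i 1) 1 := by
  classical
  induction t using Finset.induction with
  | empty => simp [monomial_zero']
  | @insert a s h ih =>
      rw [Finset.prod_insert h, Finset.sum_insert h, ih, ← pow_one (X a : MvPolynomial ℕ ℂ),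
        X_pow_eq_monomial, monomial_mul, mul_one]

lemma isHomog_mul {f g : MvPolynomial ℕ ℂ} {d e : ℕ}
    (hf : IsHomog f d) (hg : IsHomog g e) : IsHomog (f * g) (d + e) := by
  classical
  intro s hs
  obtain ⟨a, ha, b, hb, rfl⟩ := Finset.mem_add.1 (support_mul f g hs)
  simp [Finsupp.add_apply, hf a ha, hg b hb]

lemma isHomog_add {f g : MvPolynomial ℕ ℂ} {d : ℕ}
    (hf : IsHomog f d) (hg : IsHomog g d) : IsHomog (f + g) d := by
  classical
  intro s hs
  rcases Finset.mem_union.1 (support_add hs) with h | h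
  exacts [hf s h, hg s h]

lemma isHomog_neg {f : MvPolynomial ℕ ℂ} {d : ℕ} (hf : IsHomog f d) : IsHomog (-f) d := by
  intro s hs
  exact hf s (by rwa [support_neg] at hs)

lemma isHomog_C_mul {f : MvPolynomial ℕ ℂ} {d : ℕ} {z : ℂ} (hz : z ≠ 0)
    (hf : IsHomog f d) : IsHomog (C z * f) d := by
  intro s hs
  rw [mem_support_iff, coeff_C_mul] at hs
  exact hf s (mem_support_iff.2 fun h => hs (by rw [h, mul_zero]))

set_option maxHeartbeats 2000000 in
/-- for a maximal chain `⊥ = c 0 < … < c N = ⊤` with associated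
order-preserving enumeration `m` of the join-irreducibles (so `u (c j) = y_0 y_1 ⋯ y_j`),
the function field of the Hibi variety, realized as the field of quotients of
equal-degree homogeneous elements of the Hibi ring, is generated over the constants by
the `N` elements `x̂_{c j} = u (c j) / u (c 0)`, `j = 1, …, N`. -/
theorem stmt5 {L : Type*} [DistribLattice L] [Fintype L] [BoundedOrder L]
    (N : ℕ) (m : ℕ → L) (c : ℕ → L)
    (hm0 : m 0 = ⊥)
    (hinj : ∀ i, i ≤ N → ∀ j, j ≤ N → m i = m j → i = j)
    (hJI : ∀ i, i ≤ N → JoinIrred (m i))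
    (hall : ∀ x : L, JoinIrred x → ∃ i ≤ N, m i = x)
    (hord : ∀ i, i ≤ N → ∀ j, j ≤ N → m i < m j → i < j)
    (hc0 : c 0 = ⊥) (hcN : c N = ⊤)
    (hcmono : ∀ i, i < N → c i < c (i + 1))
    (hcmax : IsMaxChain (· ≤ ·) {x : L | ∃ i ≤ N, c i = x})
    (hlink : ∀ j, j ≤ N → ∀ x : L, (JoinIrred x ∧ x ≤ c j) ↔ ∃ i ≤ j, m i = x) :
    ∃ F : Subfield (FractionRing (MvPolynomial ℕ ℂ)),
      (F : Set (FractionRing (MvPolynomial ℕ ℂ))) =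
        {q : FractionRing (MvPolynomial ℕ ℂ) | q = 0 ∨
          ∃ f g : MvPolynomial ℕ ℂ, ∃ d : ℕ,
            f ∈ Algebra.adjoin ℂ (Set.range (hibiGen N m)) ∧
            g ∈ Algebra.adjoin ℂ (Set.range (hibiGen N m)) ∧
            IsHomog f d ∧ IsHomog g d ∧ g ≠ 0 ∧
            q = algebraMap (MvPolynomial ℕ ℂ) (FractionRing (MvPolynomial ℕ ℂ)) f /
                algebraMap (MvPolynomial ℕ ℂ) (FractionRing (MvPolynomial ℕ ℂ)) g} ∧
      F = Subfield.closure
        ((Set.range fun z : ℂ =>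
            algebraMap (MvPolynomial ℕ ℂ) (FractionRing (MvPolynomial ℕ ℂ)) (C z)) ∪
          {q : FractionRing (MvPolynomial ℕ ℂ) | ∃ j : ℕ, 1 ≤ j ∧ j ≤ N ∧
            q = algebraMap (MvPolynomial ℕ ℂ) (FractionRing (MvPolynomial ℕ ℂ))
                  (hibiGen N m (c j)) /
                algebraMap (MvPolynomial ℕ ℂ) (FractionRing (MvPolynomial ℕ ℂ))
                  (hibiGen N m (c 0))}) := by
  classical
  set φ : MvPolynomial ℕ ℂ →+* FractionRing (MvPolynomial ℕ ℂ)
    := algebraMap (MvPolynomial ℕ ℂ) (FractionRing (MvPolynomial ℕ ℂ)) with hφdef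
  have hφinj : Function.Injective φ := IsFractionRing.injective (MvPolynomial ℕ ℂ) (FractionRing (MvPolynomial ℕ ℂ))
  have hφ0 : ∀ {p : (MvPolynomial ℕ ℂ)}, φ p = 0 ↔ p = 0 := fun {p} => map_eq_zero_iff φ hφinj
  set A := Algebra.adjoin ℂ (Set.range (hibiGen N m)) with hA
  set S : Set (FractionRing (MvPolynomial ℕ ℂ)) := {q : (FractionRing (MvPolynomial ℕ ℂ)) | q = 0 ∨
          ∃ f g : MvPolynomial ℕ ℂ, ∃ d : ℕ,
            f ∈ A ∧ g ∈ A ∧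
            IsHomog f d ∧ IsHomog g d ∧ g ≠ 0 ∧
            q = φ f / φ g} with hS
  -- basic facts about the generators
  have hu_ne : ∀ ℓ : L, hibiGen N m ℓ ≠ 0 := by
    intro ℓ
    rw [hibiGen_prod, prodX_eq, Ne, monomial_eq_zero]
    exact one_ne_zero
  have hu_homog : ∀ ℓ : L, IsHomog (hibiGen N m ℓ) 1 := by
    intro ℓ s hs
    rw [hibiGen_prod, prodX_eq, support_monomial, if_neg one_ne_zero,
      Finset.mem_singleton] at hs
    subst hs
    rw [Finsupp.finset_sum_apply]
    have h0 : (0 : ℕ) ∈ (Finset.range (N+1)).filter (fun i => m i ≤ ℓ) := by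
      simp [Finset.mem_filter, hm0]
    calc (∑ i ∈ (Finset.range (N+1)).filter (fun i => m i ≤ ℓ), Finsupp.single i 1 0)
        = ∑ i ∈ (Finset.range (N+1)).filter (fun i => m i ≤ ℓ),
            (if i = 0 then 1 else 0) := by
          refine Finset.sum_congr rfl fun i _ => ?_
          simp [Finsupp.single_apply]
      _ = 1 := by rw [Finset.sum_ite_eq' _ 0 (fun _ => 1), if_pos h0]
  have hu_mem_sup : ∀ ℓ : L, hibiGen N m ℓ ∈ supported ℂ {i : ℕ | i ≤ N} := by
    intro ℓ
    rw [hibiGen_prod]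
    refine Subalgebra.prod_mem _ fun i hi => ?_
    rw [X_mem_supported]
    exact Nat.lt_succ_iff.1 (Finset.mem_range.1 (Finset.mem_filter.1 hi).1)
  have hadj_sup : A ≤ supported ℂ {i : ℕ | i ≤ N} :=
    Algebra.adjoin_le (by rintro _ ⟨ℓ, rfl⟩; exact hu_mem_sup ℓ)
  -- the chain generators
  have hfilter_c : ∀ j, j ≤ N →
      (Finset.range (N+1)).filter (fun i => m i ≤ c j) = Finset.range (j+1) := by
    intro j hj
    ext i
    simp only [Finset.mem_filter, Finset.mem_range, Nat.lt_succ_iff]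
    constructor
    · rintro ⟨hiN, hle⟩
      obtain ⟨i', hi'j, he⟩ := (hlink j hj (m i)).1 ⟨hJI i hiN, hle⟩
      exact (hinj i' (hi'j.trans hj) i hiN he) ▸ hi'j
    · intro hij
      exact ⟨hij.trans hj, ((hlink j hj (m i)).2 ⟨i, hij, rfl⟩).2⟩
  have hu_c : ∀ j, j ≤ N →
      hibiGen N m (c j) = ∏ i ∈ Finset.range (j+1), (X i : (MvPolynomial ℕ ℂ)) := by
    intro j hj
    rw [hibiGen_prod, hfilter_c j hj]
  have hu0 : hibiGen N m (c 0) = (X 0 : (MvPolynomial ℕ ℂ)) := by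
    rw [hu_c 0 (Nat.zero_le N), Finset.prod_range_one]
  have hX0ne : φ (X 0 : (MvPolynomial ℕ ℂ)) ≠ 0 := fun h => X_ne_zero 0 (hφ0.1 h)
  -- the w j = x̄ 1 ⋯ x̄ j
  set w : ℕ → (FractionRing (MvPolynomial ℕ ℂ)) := fun j => ∏ i ∈ Finset.range j, φ (X (i+1) : (MvPolynomial ℕ ℂ)) with hw
  have hw_ne : ∀ j, w j ≠ 0 := by
    intro j
    refine Finset.prod_ne_zero_iff.2 fun i _ h => X_ne_zero (i+1) (hφ0.1 h)
  have hφu_c : ∀ j, j ≤ N → φ (hibiGen N m (c j)) = φ (X 0 : (MvPolynomial ℕ ℂ)) * w j := by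
    intro j hj
    rw [hu_c j hj, Finset.prod_range_succ' (fun i => (X i : (MvPolynomial ℕ ℂ))) j, map_mul, mul_comm, map_prod]
  have hxc : ∀ j, j ≤ N → φ (hibiGen N m (c j)) / φ (hibiGen N m (c 0)) = w j := by
    intro j hj
    rw [hφu_c j hj, hu0, mul_div_cancel_left₀ _ hX0ne]
  set G : Set (FractionRing (MvPolynomial ℕ ℂ)) := (Set.range fun z : ℂ => φ (C z)) ∪
          {q : (FractionRing (MvPolynomial ℕ ℂ)) | ∃ j : ℕ, 1 ≤ j ∧ j ≤ N ∧
            q = φ (hibiGen N m (c j)) / φ (hibiGen N m (c 0))} with hG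
  set Kf := Subfield.closure G with hKf
  have hwK : ∀ j, j ≤ N → w j ∈ Kf := by
    intro j hj
    rcases Nat.eq_zero_or_pos j with rfl | hj1
    · simpa [hw] using Kf.one_mem
    · rw [← hxc j hj]
      exact Subfield.subset_closure (Or.inr ⟨j, hj1, hj, rfl⟩)
  have hXK : ∀ k, 1 ≤ k → k ≤ N → φ (X k : (MvPolynomial ℕ ℂ)) ∈ Kf := by
    intro k hk1 hkN
    obtain ⟨k', rfl⟩ : ∃ k', k = k' + 1 := ⟨k - 1, (Nat.succ_pred_eq_of_pos hk1).symm⟩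
    have hw' : w (k' + 1) = w k' * φ (X (k'+1) : (MvPolynomial ℕ ℂ)) := Finset.prod_range_succ _ k'
    have : φ (X (k'+1) : (MvPolynomial ℕ ℂ)) = w (k'+1) / w k' := by
      rw [hw', mul_comm, mul_div_assoc, div_self (hw_ne k'), mul_one]
    rw [this]
    exact Subfield.div_mem _ (hwK _ hkN) (hwK _ (le_trans (Nat.le_succ k') hkN))
  have hCK : ∀ z : ℂ, φ (C z) ∈ Kf := fun z => Subfield.subset_closure (Or.inl ⟨z, rfl⟩)
  -- polynomials in the variables 1..N map into Kf
  have hsupK : ∀ h ∈ supported ℂ {i : ℕ | 1 ≤ i ∧ i ≤ N}, φ h ∈ Kf := by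
    intro h hh
    rw [supported_eq_adjoin_X] at hh
    induction hh using Algebra.adjoin_induction with
    | mem x hx =>
        obtain ⟨i, ⟨hi1, hiN⟩, rfl⟩ := hx
        exact hXK i hi1 hiN
    | algebraMap r => rw [MvPolynomial.algebraMap_eq]; exact hCK r
    | add x y hx hy ihx ihy => rw [map_add]; exact Kf.add_mem ihx ihy
    | mul x y hx hy ihx ihy => rw [map_mul]; exact Kf.mul_mem ihx ihy
  -- decomposition of homogeneous elements
  have hdecomp : ∀ f ∈ supported ℂ {i : ℕ | i ≤ N}, ∀ d : ℕ, IsHomog f d →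
      ∃ h ∈ supported ℂ {i : ℕ | 1 ≤ i ∧ i ≤ N}, f = (X 0 : (MvPolynomial ℕ ℂ)) ^ d * h := by
    intro f hf d hd
    refine ⟨∑ s ∈ f.support, monomial (s.erase 0) (coeff s f), ?_, ?_⟩
    · refine Subalgebra.sum_mem _ fun s hs => ?_
      rw [monomial_eq]
      refine Subalgebra.mul_mem _ (Subalgebra.algebraMap_mem _ _) ?_
      rw [Finsupp.prod]
      refine Subalgebra.prod_mem _ fun i hi => ?_
      refine Subalgebra.pow_mem _ ?_ _
      rw [X_mem_supported]
      have hi0 : i ≠ 0 ∧ i ∈ s.support := by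
        simpa [Finsupp.support_erase, Finset.mem_erase] using hi
      exact ⟨Nat.one_le_iff_ne_zero.2 hi0.1, mem_supported.1 hf ((mem_vars i).2 ⟨s, hs, hi0.2⟩)⟩
    · conv_lhs => rw [as_sum f]
      rw [Finset.mul_sum]
      refine Finset.sum_congr rfl fun s hs => ?_
      rw [X_pow_eq_monomial, monomial_mul, one_mul, ← hd s hs, Finsupp.single_add_erase]
  -- membership helper for S
  have hmemS : ∀ f g : (MvPolynomial ℕ ℂ), ∀ d : ℕ, f ∈ A → g ∈ A → IsHomog f d → IsHomog g d → g ≠ 0 →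
      φ f / φ g ∈ S := fun f g d h1 h2 h3 h4 h5 => Or.inr ⟨f, g, d, h1, h2, h3, h4, h5, rfl⟩
  have huA : ∀ ℓ : L, hibiGen N m ℓ ∈ A := fun ℓ => Algebra.subset_adjoin ⟨ℓ, rfl⟩
  have hu0ne : φ (hibiGen N m (c 0)) ≠ 0 := fun h => hu_ne (c 0) (hφ0.1 h)
  -- S is a subfield
  have hone : (1 : (FractionRing (MvPolynomial ℕ ℂ))) ∈ S := by
    have := hmemS _ _ 1 (huA (c 0)) (huA (c 0)) (hu_homog (c 0)) (hu_homog (c 0)) (hu_ne (c 0))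
    rwa [div_self hu0ne] at this
  have hmul : ∀ a b : (FractionRing (MvPolynomial ℕ ℂ)), a ∈ S → b ∈ S → a * b ∈ S := by
    rintro a b (rfl | ⟨f1, g1, d1, hf1, hg1, hf1h, hg1h, hg1n, rfl⟩)
      (rfl | ⟨f2, g2, d2, hf2, hg2, hf2h, hg2h, hg2n, rfl⟩)
    · exact Or.inl (zero_mul _)
    · exact Or.inl (zero_mul _)
    · exact Or.inl (mul_zero _)
    · rw [div_mul_div_comm, ← map_mul, ← map_mul]
      exact hmemS _ _ (d1 + d2) (A.mul_mem hf1 hf2) (A.mul_mem hg1 hg2)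
        (isHomog_mul hf1h hf2h) (isHomog_mul hg1h hg2h) (mul_ne_zero hg1n hg2n)
  have hadd : ∀ a b : (FractionRing (MvPolynomial ℕ ℂ)), a ∈ S → b ∈ S → a + b ∈ S := by
    rintro a b (rfl | ⟨f1, g1, d1, hf1, hg1, hf1h, hg1h, hg1n, rfl⟩) hb
    · rwa [zero_add]
    rcases hb with rfl | ⟨f2, g2, d2, hf2, hg2, hf2h, hg2h, hg2n, rfl⟩
    · rw [add_zero]; exact hmemS _ _ d1 hf1 hg1 hf1h hg1h hg1n
    have h1 : φ g1 ≠ 0 := fun h => hg1n (hφ0.1 h)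
    have h2 : φ g2 ≠ 0 := fun h => hg2n (hφ0.1 h)
    rw [div_add_div _ _ h1 h2, ← map_mul, ← map_mul, ← map_mul, ← map_add]
    exact hmemS _ _ (d1 + d2) (A.add_mem (A.mul_mem hf1 hg2) (A.mul_mem hg1 hf2))
      (A.mul_mem hg1 hg2)
      (isHomog_add (isHomog_mul hf1h hg2h) (isHomog_mul hg1h hf2h))
      (isHomog_mul hg1h hg2h) (mul_ne_zero hg1n hg2n)
  have hneg : ∀ a : (FractionRing (MvPolynomial ℕ ℂ)), a ∈ S → -a ∈ S := by
    rintro a (rfl | ⟨f, g, d, hf, hg, hfh, hgh, hgn, rfl⟩)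
    · exact Or.inl neg_zero
    · have heq : -(φ f / φ g) = φ (-f) / φ g := by rw [map_neg]; ring
      rw [heq]
      exact hmemS _ _ d (A.neg_mem hf) hg (isHomog_neg hfh) hgh hgn
  have hinv : ∀ a : (FractionRing (MvPolynomial ℕ ℂ)), a ∈ S → a⁻¹ ∈ S := by
    rintro a (rfl | ⟨f, g, d, hf, hg, hfh, hgh, hgn, rfl⟩)
    · exact Or.inl inv_zero
    by_cases hf0 : f = 0
    · subst hf0
      rw [map_zero, zero_div, inv_zero]
      exact Or.inl rfl
    · have heq : (φ f / φ g)⁻¹ = φ g / φ f := by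
        have h1 : φ f ≠ 0 := fun h => hf0 (hφ0.1 h)
        have h2 : φ g ≠ 0 := fun h => hgn (hφ0.1 h)
        field_simp
      rw [heq]
      exact hmemS _ _ d hg hf hgh hfh hf0
  refine ⟨{ carrier := S
            one_mem' := hone
            mul_mem' := fun ha hb => hmul _ _ ha hb
            zero_mem' := Or.inl rfl
            add_mem' := fun ha hb => hadd _ _ ha hb
            neg_mem' := fun ha => hneg _ ha
            inv_mem' := hinv }, rfl, ?_⟩
  refine le_antisymm ?_ (Subfield.closure_le.2 ?_)
  · -- S ⊆ Kf
    rintro q (rfl | ⟨f, g, d, hfA, hgA, hfh, hgh, hgn, rfl⟩)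
    · exact Kf.zero_mem
    obtain ⟨hf', hf'sup, hfeq⟩ := hdecomp f (hadj_sup hfA) d hfh
    obtain ⟨hg', hg'sup, hgeq⟩ := hdecomp g (hadj_sup hgA) d hgh
    rw [hfeq, hgeq, map_mul, map_mul, map_pow,
      mul_div_mul_left _ _ (pow_ne_zero d hX0ne)]
    exact Kf.div_mem (hsupK _ hf'sup) (hsupK _ hg'sup)
  · -- G ⊆ S
    rintro q (⟨z, rfl⟩ | ⟨j, hj1, hjN, rfl⟩)
    · show φ (C z) ∈ S
      by_cases hz : z = 0
      · exact Or.inl (by simp [hz])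
      · have hCmem : (C z : (MvPolynomial ℕ ℂ)) ∈ A := by
          rw [← MvPolynomial.algebraMap_eq]
          exact Subalgebra.algebraMap_mem A z
        have heq : φ (C z) = φ (C z * hibiGen N m (c 0)) / φ (hibiGen N m (c 0)) := by
          rw [map_mul, mul_div_assoc, div_self hu0ne, mul_one]
        rw [heq]
        exact hmemS _ _ 1 (A.mul_mem hCmem (huA _)) (huA _)
          (isHomog_C_mul hz (hu_homog _)) (hu_homog _) (hu_ne _)
    · show φ (hibiGen N m (c j)) / φ (hibiGen N m (c 0)) ∈ S
      exact hmemS _ _ 1 (huA _) (huA _) (hu_homog _) (hu_homog _) (hu_ne _)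
end

section
/- Let 1 ≤ d ≤ n. An element I ∈ I(d,n) is join-irreducible (with the convention that the minimum [1,2,…,d] is join-irreducible) if and only if I belongs to one of the two families: (i) the consecutive family I_{0,k} = [k+1, k+2, …, k+d] for some 0 ≤ k ≤ n−d, or (ii) the one-descent family I_{s,t} = [1, …, s, t+1, t+2, …, t+d−s] for some 1 ≤ s ≤ d−1 and s < t ≤ n−d+s. In particular, I(d,n) has exactly d(n−d) + 1 join-irreducible elements (including the minimum). -/
/-- `I(d,n)`: strictly increasing `d`-tuples with entries in `{1, …, n}`. -/
def Idn (d n : ℕ) : Type :=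
  {v : Fin d → ℕ // StrictMono v ∧ ∀ t : Fin d, 1 ≤ v t ∧ v t ≤ n}

/-- Join (componentwise maximum) on `I(d,n)`. -/
def idnJoin {d n : ℕ} (a b : Idn d n) : Idn d n :=
  ⟨fun t => max (a.val t) (b.val t), by
    constructor
    · intro i j hij
      exact max_lt_max (a.prop.1 hij) (b.prop.1 hij)
    · intro t
      exact ⟨le_max_of_le_left (a.prop.2 t).1,
        max_le (a.prop.2 t).2 (b.prop.2 t).2⟩⟩

/-- Join-irreducible elements of `I(d,n)` (the minimum `[1, …, d]` counts as
join-irreducible). -/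
def idnJI {d n : ℕ} (I : Idn d n) : Prop :=
  ∀ a b : Idn d n, I = idnJoin a b → I = a ∨ I = b

namespace S13
variable {d n : ℕ}

lemma idn_ext {a b : Idn d n} (h : ∀ r, a.val r = b.val r) : a = b :=
  Subtype.ext (funext h)

lemma sm_le (I : Idn d n) : ∀ (k : ℕ) (i j : Fin d), (i:ℕ) + k = (j:ℕ) →
    I.val i + k ≤ I.val j := by
  intro k
  induction k with
  | zero =>
    intro i j h
    have : i = j := Fin.ext (by omega)
    simp [this]
  | succ m ih =>
    intro i j h
    have hjd : (i:ℕ) + m < d := by have := j.isLt; omega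
    have h1 := ih i ⟨(i:ℕ)+m, hjd⟩ rfl
    have h2 : I.val ⟨(i:ℕ)+m, hjd⟩ < I.val j := by
      apply I.prop.1
      simp [Fin.lt_def]; omega
    omega

lemma one_le (I : Idn d n) (r : Fin d) : (r:ℕ) + 1 ≤ I.val r := by
  have h0 : 0 < d := r.pos
  have h1 := sm_le I (r:ℕ) ⟨0, h0⟩ r (by simp)
  have h2 := (I.prop.2 ⟨0, h0⟩).1
  omega

lemma le_n (I : Idn d n) (r : Fin d) : I.val r + (d - 1 - (r:ℕ)) ≤ n := by
  have h0 : 0 < d := r.pos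
  have h1 := sm_le I (d - 1 - (r:ℕ)) r ⟨d-1, by omega⟩ (by have := r.isLt; simp; omega)
  have h2 := (I.prop.2 ⟨d-1, by omega⟩).2
  omega

/-- the "gap" sequence -/
def g (I : Idn d n) (r : Fin d) : ℕ := I.val r - ((r:ℕ) + 1)

lemma val_eq_g (I : Idn d n) (r : Fin d) : I.val r = (r:ℕ) + 1 + g I r := by
  have := one_le I r; unfold g; omega

lemma g_mono (I : Idn d n) {i j : Fin d} (h : i ≤ j) : g I i ≤ g I j := by
  have hle : (i:ℕ) ≤ (j:ℕ) := h
  have h1 := sm_le I ((j:ℕ) - (i:ℕ)) i j (by omega)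
  have := one_le I i; have := one_le I j
  unfold g; omega

lemma g_le (I : Idn d n) (r : Fin d) : g I r ≤ n - d := by
  have h1 := le_n I r
  have h2 := one_le I r
  have h3 := r.isLt
  unfold g; omega

def mk (hdn : d ≤ n) (gf : Fin d → ℕ)
    (hm : ∀ i j : Fin d, i ≤ j → gf i ≤ gf j) (hb : ∀ r, gf r ≤ n - d) : Idn d n :=
  ⟨fun r => (r:ℕ) + 1 + gf r, by
    constructor
    · intro i j hij
      have h1 := hm i j (le_of_lt hij)
      have h2 : (i:ℕ) < (j:ℕ) := hij
      show (i:ℕ) + 1 + gf i < (j:ℕ) + 1 + gf j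
      omega
    · intro r
      have h1 := hb r
      have h2 := r.isLt
      have h3 := hdn
      exact ⟨by show 1 ≤ (r:ℕ) + 1 + gf r; omega,
        by show (r:ℕ) + 1 + gf r ≤ n; omega⟩⟩

lemma mk_val (hdn : d ≤ n) (gf : Fin d → ℕ) (hm) (hb) (r : Fin d) :
    (mk hdn gf hm hb).val r = (r:ℕ) + 1 + gf r := rfl

lemma extend (hd : 1 ≤ d) (I x : Idn d n) (hle : ∀ j, x.val j ≤ I.val j)
    (hg : ∀ r, g I r = 0 ∨ g I r = g I ⟨d-1, by omega⟩)
    {i j : Fin d} (hij : i ≤ j) (hxi : x.val i = I.val i) (hgi : g I i ≠ 0) :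
    x.val j = I.val j := by
  have h1 : g I i = g I ⟨d-1, by omega⟩ := (hg i).resolve_left hgi
  have hmono : g I i ≤ g I j := g_mono I hij
  have h2 : g I j = g I ⟨d-1, by omega⟩ := by
    rcases hg j with h | h
    · omega
    · exact h
  have hijn : (i:ℕ) ≤ (j:ℕ) := hij
  have h3 := sm_le x ((j:ℕ) - (i:ℕ)) i j (by omega)
  have h4 := hle j
  have h5 := val_eq_g I i
  have h6 := val_eq_g I j
  omega

lemma ji_iff (hd : 1 ≤ d) (hdn : d ≤ n) (I : Idn d n) :
    idnJI I ↔ ∀ r, g I r = 0 ∨ g I r = g I ⟨d-1, by omega⟩ := by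
  constructor
  · intro hJI
    by_contra hc
    push_neg at hc
    obtain ⟨r, hr0, hrc⟩ := hc
    set c := g I ⟨d-1, by omega⟩ with hcdef
    have hrlast : g I r ≤ c := g_mono I (by
      show (r:ℕ) ≤ d - 1; have := r.isLt; omega)
    set m := g I r with hmdef
    have hm0 : 0 < m := by omega
    have hmc : m < c := by omega
    set a := mk hdn (fun j => min (g I j) m)
      (fun i j hij => min_le_min (g_mono I hij) le_rfl)
      (fun j => le_trans (min_le_left _ _) (g_le I j)) with ha
    set b := mk hdn (fun j => if g I j ≤ m then 0 else g I j)
      (by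
        intro i j hij
        by_cases h : g I j ≤ m
        · have := g_mono I hij
          simp [h, show g I i ≤ m by omega]
        · simp only [h, if_neg]
          by_cases h' : g I i ≤ m <;> simp [h', h]
          exact g_mono I hij)
      (by
        intro j
        by_cases h : g I j ≤ m <;> simp [h]
        exact g_le I j) with hb
    have hIab : I = idnJoin a b := by
      apply idn_ext
      intro j
      show I.val j = max (a.val j) (b.val j)
      rw [ha, hb, mk_val, mk_val]
      have := val_eq_g I j
      by_cases h : g I j ≤ m <;> simp [h] <;> omega
    rcases hJI a b hIab with h | h
    · have := congrFun (congrArg Subtype.val h) (⟨d-1, by omega⟩ : Fin d)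
      rw [ha, mk_val] at this
      have h5 := val_eq_g I (⟨d-1, by omega⟩ : Fin d)
      rw [min_eq_right (le_of_lt hmc)] at this
      have h6 : ((⟨d-1, by omega⟩ : Fin d) : ℕ) = d - 1 := rfl
      omega
    · have := congrFun (congrArg Subtype.val h) r
      rw [hb, mk_val] at this
      have h5 := val_eq_g I r
      rw [if_pos (le_refl m)] at this
      omega
  · intro hg a b hab
    by_contra hcon
    push_neg at hcon
    obtain ⟨ha, hb⟩ := hcon
    have hv : ∀ j, I.val j = max (a.val j) (b.val j) :=
      fun j => congrFun (congrArg Subtype.val hab) j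
    have hai : ∃ i, a.val i ≠ I.val i := by
      by_contra h; push_neg at h
      exact ha (idn_ext fun r => (h r).symm)
    have hbi : ∃ i, b.val i ≠ I.val i := by
      by_contra h; push_neg at h
      exact hb (idn_ext fun r => (h r).symm)
    obtain ⟨i, hi⟩ := hai
    obtain ⟨i', hi'⟩ := hbi
    have hale : ∀ j, a.val j ≤ I.val j := fun j => (hv j).symm ▸ le_max_left _ _
    have hble : ∀ j, b.val j ≤ I.val j := fun j => (hv j).symm ▸ le_max_right _ _
    have hbeq : b.val i = I.val i := by
      have := hv i; have := hale i; have := hble i; omega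
    have haeq : a.val i' = I.val i' := by
      have := hv i'; have := hale i'; have := hble i'; omega
    have hgi : g I i ≠ 0 := by
      have h1 := one_le a i
      have h2 := val_eq_g I i
      have h3 := hale i
      omega
    have hgi' : g I i' ≠ 0 := by
      have h1 := one_le b i'
      have h2 := val_eq_g I i'
      have h3 := hble i'
      omega
    rcases le_total i i' with h | h
    · exact hi' (extend hd I b hble hg h hbeq hgi)
    · exact hi (extend hd I a hale hg h haeq hgi')


/-- the two families, as a statement about `I` -/
def Fam (I : Idn d n) : Prop :=
  (∃ k : ℕ, k ≤ n - d ∧ ∀ r : Fin d, I.val r = k + 1 + (r : ℕ)) ∨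
  (∃ s t : ℕ, 1 ≤ s ∧ s ≤ d - 1 ∧ s < t ∧ t ≤ n - d + s ∧
    ∀ r : Fin d, I.val r =
      if (r : ℕ) < s then (r : ℕ) + 1 else t + 1 + ((r : ℕ) - s))

lemma gform_iff_fam (hd : 1 ≤ d) (hdn : d ≤ n) (I : Idn d n) :
    (∀ r, g I r = 0 ∨ g I r = g I ⟨d-1, by omega⟩) ↔ Fam I := by
  set last : Fin d := ⟨d-1, by omega⟩ with hlast
  have hlastv : (last : ℕ) = d - 1 := rfl
  set c := g I last with hc
  constructor
  · intro hg
    by_cases h0 : g I ⟨0, by omega⟩ = c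
    · left
      refine ⟨c, g_le I last, fun r => ?_⟩
      have h1 : g I ⟨0, by omega⟩ ≤ g I r := g_mono I (by show (0:ℕ) ≤ (r:ℕ); omega)
      have h2 : g I r ≤ g I last := g_mono I (by show (r:ℕ) ≤ (last:ℕ); rw [hlastv]; have := r.isLt; omega)
      have h3 := val_eq_g I r
      omega
    · right
      have hg0 : g I ⟨0, by omega⟩ = 0 := (hg _).resolve_right h0
      have hcne : c ≠ 0 := fun h => h0 (by rw [hg0, h])
      classical
      have hP : ∃ m : ℕ, ∃ hm : m < d, g I ⟨m, hm⟩ ≠ 0 := ⟨d-1, by omega, by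
        show g I last ≠ 0; omega⟩
      set s := Nat.find hP with hs
      obtain ⟨hsd, hgs⟩ := Nat.find_spec hP
      have hgsc : g I ⟨s, hsd⟩ = c := (hg _).resolve_left hgs
      have hzero : ∀ m (hm : m < d), m < s → g I ⟨m, hm⟩ = 0 := by
        intro m hm hms
        have := Nat.find_min hP hms
        push_neg at this
        exact this hm
      have hs1 : 1 ≤ s := by
        rcases Nat.eq_zero_or_pos s with h | h
        · exfalso; apply hgs; rw [show (⟨s, hsd⟩ : Fin d) = ⟨0, by omega⟩ from Fin.ext h]
          exact hg0
        · exact h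
      refine ⟨s, s + c, hs1, by omega, by omega, by have := g_le I last; omega, fun r => ?_⟩
      have hval := val_eq_g I r
      by_cases hr : (r:ℕ) < s
      · have : g I r = 0 := by
          have := hzero (r:ℕ) r.isLt hr
          rwa [Fin.eta] at this
        simp only [hr, if_pos]
        omega
      · have hle : g I ⟨s, hsd⟩ ≤ g I r := g_mono I (by show (s:ℕ) ≤ (r:ℕ); omega)
        have : g I r = c := by
          rcases hg r with h | h
          · omega
          · exact h
        simp only [hr, if_neg, if_false]
        omega
  · rintro (⟨k, hk, hv⟩ | ⟨s, t, h1, h2, h3, h4, hv⟩)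
    · have hgr : ∀ r, g I r = k := by
        intro r
        have := val_eq_g I r
        have := hv r
        omega
      intro r
      right
      rw [hc, hgr, hgr]
    · have hgr : ∀ r : Fin d, g I r = if (r:ℕ) < s then 0 else t - s := by
        intro r
        have h5 := val_eq_g I r
        have h6 := hv r
        by_cases h : (r:ℕ) < s <;> simp only [h, if_pos, if_neg, if_false] at h6 ⊢ <;> omega
      intro r
      have hglast : g I last = t - s := by
        rw [hgr]
        have : ¬ ((last:ℕ) < s) := by rw [hlastv]; omega
        simp [this]
      by_cases h : (r:ℕ) < s
      · left; rw [hgr]; simp [h]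
      · right; rw [hc, hgr, hglast]; simp [h]

lemma ji_iff_fam (hd : 1 ≤ d) (hdn : d ≤ n) (I : Idn d n) : idnJI I ↔ Fam I := by
  rw [ji_iff hd hdn, gform_iff_fam hd hdn]


lemma mk_g (hdn : d ≤ n) (gf : Fin d → ℕ) (hm) (hb) (r : Fin d) :
    g (mk hdn gf hm hb) r = gf r := by
  unfold g; rw [mk_val]; omega

def Gf (s c : ℕ) : Fin d → ℕ := fun j => if (j:ℕ) < s then 0 else c

lemma Gf_mono (s c : ℕ) : ∀ i j : Fin d, i ≤ j → Gf s c i ≤ Gf s c j := by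
  intro i j hij
  have h : (i:ℕ) ≤ (j:ℕ) := hij
  unfold Gf
  by_cases hj : (j:ℕ) < s
  · simp [hj, show (i:ℕ) < s by omega]
  · simp only [hj, if_false]
    by_cases hi : (i:ℕ) < s <;> simp [hi]

lemma Gf_bd (s c : ℕ) (hc : c ≤ n - d) : ∀ r : Fin d, Gf s c r ≤ n - d := by
  intro r
  unfold Gf
  split
  · omega
  · exact hc

def F (hd : 1 ≤ d) (hdn : d ≤ n) :
    (Fin d × Fin (n - d)) ⊕ Unit → {I : Idn d n | idnJI I}
  | Sum.inl p =>
    ⟨mk hdn (Gf (p.1:ℕ) ((p.2:ℕ)+1)) (Gf_mono _ _)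
        (Gf_bd _ _ (by have := p.2.isLt; omega)), by
      rw [Set.mem_setOf_eq, ji_iff hd hdn]
      intro r
      rw [mk_g, mk_g]
      have hlast : Gf (p.1:ℕ) ((p.2:ℕ)+1) (⟨d-1, by omega⟩ : Fin d) = (p.2:ℕ)+1 := by
        have h : ¬ (((⟨d-1, by omega⟩ : Fin d):ℕ) < (p.1:ℕ)) := by
          show ¬ (d-1 < (p.1:ℕ)); have := p.1.isLt; omega
        simp [Gf, h]
      rw [hlast]
      unfold Gf
      split
      · left; rfl
      · right; rfl⟩
  | Sum.inr _ =>
    ⟨mk hdn (fun _ => 0) (fun _ _ _ => le_rfl) (fun _ => Nat.zero_le _), by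
      rw [Set.mem_setOf_eq, ji_iff hd hdn]
      intro r
      left
      rw [mk_g]⟩

lemma F_val_inl (hd : 1 ≤ d) (hdn : d ≤ n) (p : Fin d × Fin (n - d)) (r : Fin d) :
    ((F hd hdn (Sum.inl p)) : Idn d n).val r = (r:ℕ) + 1 + Gf (p.1:ℕ) ((p.2:ℕ)+1) r := rfl

lemma F_val_inr (hd : 1 ≤ d) (hdn : d ≤ n) (u : Unit) (r : Fin d) :
    ((F hd hdn (Sum.inr u)) : Idn d n).val r = (r:ℕ) + 1 + 0 := rfl

lemma F_inj (hd : 1 ≤ d) (hdn : d ≤ n) : Function.Injective (F hd hdn) := by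
  intro x y hxy
  have hval : ∀ r : Fin d, ((F hd hdn x) : Idn d n).val r = ((F hd hdn y) : Idn d n).val r := by
    intro r; rw [hxy]
  match x, y with
  | Sum.inl p, Sum.inl q =>
    have hlastn : ¬ (d - 1 < (p.1:ℕ)) := by have := p.1.isLt; omega
    have hlastn' : ¬ (d - 1 < (q.1:ℕ)) := by have := q.1.isLt; omega
    have hlast := hval ⟨d-1, by omega⟩
    rw [F_val_inl, F_val_inl] at hlast
    simp only [Gf, show ((⟨d-1, by omega⟩ : Fin d):ℕ) = d - 1 from rfl,
      hlastn, hlastn', if_false] at hlast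
    have hc : (p.2:ℕ) = (q.2:ℕ) := by omega
    have hs : (p.1:ℕ) = (q.1:ℕ) := by
      rcases lt_trichotomy (p.1:ℕ) (q.1:ℕ) with h | h | h
      · exfalso
        have h2 := hval ⟨(p.1:ℕ), p.1.isLt⟩
        rw [F_val_inl, F_val_inl] at h2
        simp only [Gf, show ((⟨(p.1:ℕ), p.1.isLt⟩ : Fin d):ℕ) = (p.1:ℕ) from rfl,
          lt_irrefl, if_false, h, if_true] at h2
        omega
      · exact h
      · exfalso
        have h2 := hval ⟨(q.1:ℕ), q.1.isLt⟩
        rw [F_val_inl, F_val_inl] at h2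
        simp only [Gf, show ((⟨(q.1:ℕ), q.1.isLt⟩ : Fin d):ℕ) = (q.1:ℕ) from rfl,
          lt_irrefl, if_false, h, if_true] at h2
        omega
    have : p = q := Prod.ext (Fin.ext hs) (Fin.ext hc)
    rw [this]
  | Sum.inl p, Sum.inr u =>
    exfalso
    have hlastn : ¬ (d - 1 < (p.1:ℕ)) := by have := p.1.isLt; omega
    have hlast := hval ⟨d-1, by omega⟩
    rw [F_val_inl, F_val_inr] at hlast
    simp only [Gf, show ((⟨d-1, by omega⟩ : Fin d):ℕ) = d - 1 from rfl,
      hlastn, if_false] at hlast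
    omega
  | Sum.inr u, Sum.inl p =>
    exfalso
    have hlastn : ¬ (d - 1 < (p.1:ℕ)) := by have := p.1.isLt; omega
    have hlast := hval ⟨d-1, by omega⟩
    rw [F_val_inr, F_val_inl] at hlast
    simp only [Gf, show ((⟨d-1, by omega⟩ : Fin d):ℕ) = d - 1 from rfl,
      hlastn, if_false] at hlast
    omega
  | Sum.inr u, Sum.inr v => cases u; cases v; rfl

lemma F_surj (hd : 1 ≤ d) (hdn : d ≤ n) : Function.Surjective (F hd hdn) := by
  rintro ⟨I, hI⟩
  have hFam := (ji_iff_fam hd hdn I).mp hI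
  rcases hFam with ⟨k, hk, hv⟩ | ⟨s, t, h1, h2, h3, h4, hv⟩
  · rcases Nat.eq_zero_or_pos k with hk0 | hk1
    · refine ⟨Sum.inr Unit.unit, Subtype.ext (idn_ext fun r => ?_)⟩
      rw [F_val_inr, hv r]
      omega
    · refine ⟨Sum.inl (⟨0, by omega⟩, ⟨k-1, by omega⟩), Subtype.ext (idn_ext fun r => ?_)⟩
      rw [F_val_inl, hv r]
      show (r:ℕ) + 1 + Gf 0 (k-1+1) r = k + 1 + (r:ℕ)
      simp only [Gf, Nat.not_lt_zero, if_false]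
      omega
  · refine ⟨Sum.inl (⟨s, by omega⟩, ⟨t-s-1, by omega⟩), Subtype.ext (idn_ext fun r => ?_)⟩
    rw [F_val_inl, hv r]
    show (r:ℕ) + 1 + Gf s (t-s-1+1) r = _
    simp only [Gf]
    by_cases h : (r:ℕ) < s <;> simp only [h, if_true, if_false] <;> omega

end S13


/-- the join-irreducible elements of `I(d,n)` are exactly the consecutive
family `I_{0,k} = [k+1, …, k+d]` (`0 ≤ k ≤ n−d`) and the one-descent family
`I_{s,t} = [1, …, s, t+1, …, t+d−s]` (`1 ≤ s ≤ d−1`, `s < t ≤ n−d+s`); in particular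
there are exactly `d(n−d) + 1` join-irreducible elements. -/
theorem stmt13 (d n : ℕ) (hd : 1 ≤ d) (hdn : d ≤ n) :
    (∀ I : Idn d n, idnJI I ↔
      ((∃ k : ℕ, k ≤ n - d ∧ ∀ r : Fin d, I.val r = k + 1 + (r : ℕ)) ∨
       (∃ s t : ℕ, 1 ≤ s ∧ s ≤ d - 1 ∧ s < t ∧ t ≤ n - d + s ∧
         ∀ r : Fin d, I.val r =
           if (r : ℕ) < s then (r : ℕ) + 1 else t + 1 + ((r : ℕ) - s)))) ∧
    Set.ncard {I : Idn d n | idnJI I} = d * (n - d) + 1 := by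
  constructor
  · intro I
    exact S13.ji_iff_fam hd hdn I
  · have hbij : Function.Bijective (S13.F hd hdn) := ⟨S13.F_inj hd hdn, S13.F_surj hd hdn⟩
    have h1 := Nat.card_eq_of_bijective _ hbij
    rw [← Nat.card_coe_set_eq, ← h1]
    simp [Nat.card_eq_fintype_card]
end

section
/- Let 1 ≤ d ≤ n. For every I = [i_1, …, i_d] ∈ I(d,n), ω(Spec(I)) = wt(I) − wt([1,2,…,d]), i.e. Σ_{m ∈ Spec(I)} ω(m) = (ε_{i_1} + … + ε_{i_d}) − (ε_1 + … + ε_d) in ℝ^n. -/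
/-- The componentwise partial order on `I(d,n)`. -/
def idnLE {d n : ℕ} (a b : Idn d n) : Prop := ∀ r : Fin d, a.val r ≤ b.val r

/-- The basis vector `ε_i` of `ℝ^n` (coordinates indexed by `1, …, n ∈ ℕ`). -/
def vecEps (i : ℕ) : ℕ → ℝ := fun j => if j = i then 1 else 0

/-!
A join-irreducible `m ≠ [1, …, d]` has the shape `I_{s,t} = [1, …, s, t + 1, t + 2, …]`: if `m`
rose by more than `j − i` between positions `i < j` past its first entry off `[1, …, d]`, it
would be the join of two smaller tuples. Hence the nonzero part of `ω(Spec I)` splits according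
to `s`, and for fixed `s` the elements of `Spec I` are the `I_{s,t}` with `s < t < i_{s+1}`, whose
weights `ε_{t+1} − ε_t` telescope to `ε_{i_{s+1}} − ε_{s+1}`. Summing over `s` gives
`wt(I) − wt([1, …, d])`.
-/

theorem strictMono_ite_le {α β : Type*} [LinearOrder α] [Preorder β] {f g : α → β}
    (hf : StrictMono f) (hg : StrictMono g) {i : α} (hfg : ∀ j, i < j → f i < g j) :
    StrictMono fun r => if r ≤ i then f r else g r := by
  intro a b hab
  by_cases hb : b ≤ i
  · simp only [if_pos (hab.le.trans hb), if_pos hb]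
    exact hf hab
  · by_cases ha : a ≤ i
    · simp only [if_pos ha, if_neg hb]
      exact (hf.monotone ha).trans_lt (hfg b (not_le.mp hb))
    · simp only [if_neg ha, if_neg hb]
      exact hg hab

theorem Fin.add_sub_le_of_strictMono {d : ℕ} {f : Fin d → ℕ} (hf : StrictMono f) {a b : Fin d}
    (hab : a ≤ b) : f a + ((b : ℕ) - a) ≤ f b := by
  obtain ⟨k, hk⟩ := Nat.exists_eq_add_of_le (Fin.le_def.mp hab)
  induction k generalizing b with
  | zero =>
    obtain rfl : b = a := Fin.ext hk
    simp
  | succ k ih =>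
    let c : Fin d := ⟨a + k, by omega⟩
    have hcv : (c : ℕ) = a + k := rfl
    have hc := ih (b := c) (Fin.le_def.mpr (by simp [c])) rfl
    have hcb : f c < f b := hf (Fin.lt_def.mpr (by simp [c]; omega))
    omega

namespace Idn

variable {d n : ℕ}

instance : Finite (Idn d n) :=
  Finite.of_injective (fun m r => (⟨m.val r, Nat.lt_succ_of_le (m.2.2 r).2⟩ : Fin (n + 1)))
    fun _ _ h => Subtype.ext <| funext fun r => congrArg Fin.val (congrFun h r)

theorem val_add_sub_le (m : Idn d n) {a b : Fin d} (hab : a ≤ b) :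
    m.val a + ((b : ℕ) - a) ≤ m.val b :=
  Fin.add_sub_le_of_strictMono m.2.1 hab

theorem succ_le_val (m : Idn d n) (r : Fin d) : (r : ℕ) + 1 ≤ m.val r := by
  have h0 := m.val_add_sub_le (a := ⟨0, r.pos⟩) (Nat.zero_le r)
  have h1 := (m.2.2 ⟨0, r.pos⟩).1
  simp only [Nat.sub_zero] at h0
  omega

/-- `[1, …, s, v, v + 1, …]`, positions counted from `0`; for `v = t + 1` this is `I_{s,t}`. -/
def runTuple (s v r : ℕ) : ℕ := if r < s then r + 1 else v + (r - s)

theorem runTuple_strictMono {s v : ℕ} (hsv : s < v) : StrictMono (runTuple s v) := by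
  intro i j hij
  unfold runTuple
  split_ifs <;> omega

theorem eq_of_le_of_val_eq {m c : Idn d n} {s : Fin d}
    (hm : ∀ r : Fin d, m.val r = runTuple s (m.val s) r) (hcm : idnLE c m)
    (hs : c.val s = m.val s) : c = m := by
  refine Subtype.ext <| funext fun r => ?_
  have hlow := c.succ_le_val r
  have hle := hcm r
  have hmr := hm r
  unfold runTuple at hmr
  split_ifs at hmr with hr
  · omega
  · have := c.val_add_sub_le (a := s) (b := r) (by simp only [Fin.le_def]; omega)
    omega

theorem idnJI_of_eq_runTuple {m : Idn d n} {s : Fin d}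
    (hm : ∀ r : Fin d, m.val r = runTuple s (m.val s) r) : idnJI m := by
  intro a b hab
  have hval (r : Fin d) : m.val r = max (a.val r) (b.val r) :=
    congrFun (congrArg Subtype.val hab) r
  rcases max_choice (a.val s) (b.val s) with h | h
  · exact .inl <| (eq_of_le_of_val_eq hm (fun r => hval r ▸ le_max_left _ _)
      (by rw [hval, h])).symm
  · exact .inr <| (eq_of_le_of_val_eq hm (fun r => hval r ▸ le_max_right _ _)
      (by rw [hval, h])).symm

/-- A jump `m j - m i > j - i` lets `m` split as the join of `m` flattened after `i`
and `m` reset to `[1, …, i + 1]` up to `i`; irreducibility forces the latter to be `m`. -/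
theorem val_eq_of_idnJI_of_gap {m : Idn d n} (hm : idnJI m) {i j : Fin d} (hij : i < j)
    (hgap : m.val i + ((j : ℕ) - i) < m.val j) : m.val i = (i : ℕ) + 1 := by
  have hi := m.succ_le_val i
  have hrun (r : Fin d) (hr : i < r) : (r : ℕ) + (m.val i - i) ≤ m.val r := by
    have := m.val_add_sub_le hr.le
    omega
  let a : Idn d n := ⟨fun r => if r ≤ i then m.val r else (r : ℕ) + (m.val i - i),
    strictMono_ite_le m.2.1 (fun _ _ h => by simp only [Fin.lt_def] at h; omega)
      (fun r hr => by simp only [Fin.lt_def] at hr; omega),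
    fun r => by
      have := m.2.2 r
      dsimp only
      split_ifs with hr
      · exact this
      · have := hrun r (not_le.mp hr)
        omega⟩
  let b : Idn d n := ⟨fun r => if r ≤ i then (r : ℕ) + 1 else m.val r,
    strictMono_ite_le (fun _ _ h => by simp only [Fin.lt_def] at h; omega) m.2.1
      (fun r hr => by have := m.succ_le_val r; simp only [Fin.lt_def] at hr; omega),
    fun r => by
      have := m.2.2 r
      have := m.succ_le_val r
      dsimp only
      split_ifs <;> omega⟩
  have hab : m = idnJoin a b := Subtype.ext <| funext fun r => by
    show m.val r = max (if r ≤ i then m.val r else (r : ℕ) + (m.val i - i))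
      (if r ≤ i then (r : ℕ) + 1 else m.val r)
    have := m.succ_le_val r
    split_ifs with hr
    · omega
    · have := hrun r (not_le.mp hr)
      omega
  rcases hm a b hab with h | h
  · have hj : a.val j = (j : ℕ) + (m.val i - i) := if_neg (not_le.mpr hij)
    rw [← h] at hj
    omega
  · have hi : b.val i = (i : ℕ) + 1 := if_pos le_rfl
    rwa [← h] at hi

theorem eq_runTuple_of_idnJI {m : Idn d n} (hm : idnJI m) {s : Fin d}
    (hpre : ∀ r : Fin d, r < s → m.val r = (r : ℕ) + 1) (hs : m.val s ≠ (s : ℕ) + 1)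
    (r : Fin d) : m.val r = runTuple s (m.val s) r := by
  unfold runTuple
  split_ifs with hr
  · exact hpre r hr
  · rcases (not_lt.mp hr).lt_or_eq with hsr | hsr
    · have := m.val_add_sub_le hsr.le
      by_contra hne
      exact hs (val_eq_of_idnJI_of_gap hm hsr (by omega))
    · obtain rfl : s = r := Fin.ext hsr
      simp

def spec (I : Idn d n) : Set (Idn d n) := {m | idnJI m ∧ idnLE m I}

def specPart (I : Idn d n) (s : Fin d) : Set (Idn d n) :=
  {m ∈ spec I | (∀ r : Fin d, r < s → m.val r = (r : ℕ) + 1) ∧ m.val s ≠ (s : ℕ) + 1}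

theorem iUnion_specPart_subset (I : Idn d n) : ⋃ s, specPart I s ⊆ spec I :=
  Set.iUnion_subset fun _ => Set.sep_subset _ _

theorem pairwise_disjoint_specPart (I : Idn d n) :
    Pairwise (Function.onFun Disjoint (specPart I)) := by
  have key {s t : Fin d} (hst : s < t) : Disjoint (specPart I s) (specPart I t) :=
    Set.disjoint_left.mpr fun _ hs ht => hs.2.2 (ht.2.1 s hst)
  intro s t hst
  rcases hst.lt_or_gt with h | h
  exacts [key h, (key h).symm]

theorem val_eq_of_mem_spec_diff {I m : Idn d n} (hm : m ∈ spec I \ ⋃ s, specPart I s)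
    (r : Fin d) : m.val r = (r : ℕ) + 1 := by
  by_contra hr
  obtain ⟨s, hs, hmin⟩ :=
    wellFounded_lt.has_min {r : Fin d | m.val r ≠ (r : ℕ) + 1} ⟨r, hr⟩
  refine hm.2 (Set.mem_iUnion.mpr ⟨s, hm.1, fun r hrs => ?_, hs⟩)
  by_contra hr
  exact hmin r hr hrs

theorem runTuple_le_val (I : Idn d n) {s : Fin d} {v : ℕ} (hvI : v ≤ I.val s) (r : Fin d) :
    runTuple s v r ≤ I.val r := by
  have := I.succ_le_val r
  unfold runTuple
  split_ifs with hr
  · exact this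
  · have := I.val_add_sub_le (a := s) (b := r) (by simp only [Fin.le_def]; omega)
    omega

/-- `m ↦ m s - 1` identifies `specPart I s` with the range of `t` in `I_{s,t} ≤ I`. -/
theorem bijOn_specPart (I : Idn d n) (s : Fin d) :
    Set.BijOn (fun m : Idn d n => m.val s - 1) (specPart I s)
      (Set.Ico ((s : ℕ) + 1) (I.val s)) := by
  refine ⟨fun m hm => ?_, fun m hm m' hm' h => ?_, fun v hv => ?_⟩
  · have := m.succ_le_val s
    have := hm.1.2 s
    have := hm.2.2
    simp only [Set.mem_Ico]
    omega
  · have hms := m.succ_le_val s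
    have hms' := m'.succ_le_val s
    have := hm.2.2
    have := hm'.2.2
    have hs : m.val s = m'.val s := by simp only at h; omega
    refine Subtype.ext <| funext fun r => ?_
    rw [eq_runTuple_of_idnJI hm.1.1 hm.2.1 hm.2.2, eq_runTuple_of_idnJI hm'.1.1 hm'.2.1 hm'.2.2,
      hs]
  · obtain ⟨hsv, hvI⟩ := hv
    have hle := runTuple_le_val I (s := s) (Nat.succ_le_of_lt hvI)
    let x : Idn d n := ⟨fun r => runTuple s (v + 1) r,
      (runTuple_strictMono (by omega)).comp Fin.val_strictMono,
      fun r => ⟨by simp only [runTuple]; split_ifs <;> omega, (hle r).trans (I.2.2 r).2⟩⟩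
    have hxs : x.val s = v + 1 := by
      show runTuple s (v + 1) s = v + 1
      simp [runTuple]
    have hx : ∀ r : Fin d, x.val r = runTuple s (x.val s) r := fun r => by rw [hxs]
    refine ⟨x, ⟨⟨idnJI_of_eq_runTuple hx, hle⟩, fun r hr => if_pos hr, by omega⟩, by
      simp only [hxs, Nat.add_sub_cancel]⟩

theorem finsum_specPart {M : Type*} [AddCommGroup M] (I : Idn d n) (s : Fin d) (g : ℕ → M) :
    ∑ᶠ m ∈ specPart I s, (g (m.val s) - g (m.val s - 1))
      = g (I.val s) - g ((s : ℕ) + 1) := by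
  have hsub_add (m : Idn d n) : m.val s - 1 + 1 = m.val s := by have := m.succ_le_val s; omega
  rw [finsum_mem_eq_of_bijOn _ (bijOn_specPart I s) (g := fun v => g (v + 1) - g v)
      fun m _ => by simp only [hsub_add], ← Finset.coe_Ico, finsum_mem_coe_finset]
  exact Finset.sum_Ico_sub g (I.succ_le_val s)

end Idn

theorem stmt14_general (d n : ℕ)
    (ω : Idn d n → ℕ → ℝ)
    (hω0 : ∀ m : Idn d n, (∀ r : Fin d, m.val r = (r : ℕ) + 1) → ω m = 0)
    (hω : ∀ m : Idn d n, idnJI m → ∀ s : Fin d,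
      (∀ r : Fin d, (r : ℕ) < (s : ℕ) → m.val r = (r : ℕ) + 1) →
      m.val s ≠ (s : ℕ) + 1 →
      ω m = vecEps (m.val s) - vecEps (m.val s - 1))
    (I : Idn d n) :
    ∑ᶠ m ∈ {x : Idn d n | idnJI x ∧ idnLE x I}, ω m
      = (∑ r : Fin d, vecEps (I.val r)) - ∑ r : Fin d, vecEps ((r : ℕ) + 1) := by
  have hpart (s : Fin d) :
      ∑ᶠ m ∈ Idn.specPart I s, ω m = vecEps (I.val s) - vecEps ((s : ℕ) + 1) := by
    rw [← Idn.finsum_specPart I s vecEps]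
    exact finsum_mem_congr rfl fun m hm => hω m hm.1.1 s hm.2.1 hm.2.2
  change ∑ᶠ m ∈ Idn.spec I, ω m = _
  rw [← finsum_mem_inter_add_sdiff' (⋃ s, Idn.specPart I s) (Set.toFinite _),
    Set.inter_eq_right.mpr (Idn.iUnion_specPart_subset I),
    finsum_mem_of_eqOn_zero fun m hm => hω0 m (Idn.val_eq_of_mem_spec_diff hm), add_zero,
    finsum_mem_iUnion (Idn.pairwise_disjoint_specPart I) fun _ => Set.toFinite _,
    finsum_eq_sum_of_fintype, Finset.sum_congr rfl fun s _ => hpart s, Finset.sum_sub_distrib]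

/-- for every `I = [i_1, …, i_d] ∈ I(d,n)`,
`ω(Spec I) = wt(I) − wt([1, …, d]) = (ε_{i_1} + … + ε_{i_d}) − (ε_1 + … + ε_d)`,
where `ω` is the map with `ω(I_{0,0}) = 0` and `ω(I_{s,t}) = ε_{t+1} − ε_t`. -/
theorem stmt14 (d n : ℕ) (hd : 1 ≤ d) (hdn : d ≤ n)
    (ω : Idn d n → ℕ → ℝ)
    (hω0 : ∀ m : Idn d n, (∀ r : Fin d, m.val r = (r : ℕ) + 1) → ω m = 0)
    (hω : ∀ m : Idn d n, idnJI m → ∀ s : Fin d,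
      (∀ r : Fin d, (r : ℕ) < (s : ℕ) → m.val r = (r : ℕ) + 1) →
      m.val s ≠ (s : ℕ) + 1 →
      ω m = vecEps (m.val s) - vecEps (m.val s - 1))
    (I : Idn d n) :
    ∑ᶠ m ∈ {x : Idn d n | idnJI x ∧ idnLE x I}, ω m
      = (∑ r : Fin d, vecEps (I.val r)) - ∑ r : Fin d, vecEps ((r : ℕ) + 1) :=
  stmt14_general d n ω hω0 hω I
end

section
/- Let 1 ≤ d ≤ n and I ∈ I(d,n) with associated set β(I) = {β_1, …, β_k} defined via the pairing map. Then: (1) each β_r is an element of R_{d,n}; precisely, if I_{r−1} = [1, …, s, i_{s+1}, …, i_d] with s = s(I_{r−1}), then β_r = ω(Spec(I_{r−1}) \ Spec(I_r)) = ε_{i_d} − ε_{s+1} = α_{s+1, i_d − 1}; and (2) β(I) is an antichain in the poset R_{d,n}. -/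
/-- The last index `d - 1` of `Fin d`. -/
def lastIdx (d : ℕ) (hd : 0 < d) : Fin d := ⟨d - 1, Nat.sub_lt hd one_pos⟩

/-!
A join-irreducible element other than the minimum is `I_{a,t}`, where `a` is its first position
differing from `[1, …, d]`, and `I_{a,t} ≤ J` iff `t < J_a`. Hence `Spec J \ Spec J'` consists of
the `I_{a,t}` with `J'_a ≤ t < J_a`, and for each `a` the weights `ε_{t+1} - ε_t` telescope, so
that `ω(Spec J \ Spec J') = Σ_a (ε_{J_a} - ε_{J'_a})`. For `J' = p(J)` the entries of `J'` are,
as a multiset, those of `J` with the last one, `i_d`, replaced by `s + 1`, which leaves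
`ε_{i_d} - ε_{s+1}`. Along the iteration `s` strictly increases while the last entry strictly
decreases, so the roots `α_{s+1, i_d - 1}` form an antichain.
-/

namespace Idn

variable {d n : ℕ}

theorem add_sub_le (m : Idn d n) {i j : Fin d} (hij : i ≤ j) :
    m.val i + ((j : ℕ) - i) ≤ m.val j := by
  obtain ⟨k, hk⟩ : ∃ k, (j : ℕ) = i + k := ⟨j - i, by omega⟩
  induction k generalizing j with
  | zero => rw [show j = i from Fin.ext (by omega)]; simp
  | succ k ih =>
    have hik : (i : ℕ) + k < d := by omega
    have hprev := ih (j := ⟨i + k, hik⟩) (Fin.le_def.2 (by simp)) rfl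
    have hstep := m.prop.1 (show (⟨i + k, hik⟩ : Fin d) < j from Fin.lt_def.2 (by simp only; omega))
    simp only at hprev
    omega

theorem succ_le (m : Idn d n) (i : Fin d) : (i : ℕ) + 1 ≤ m.val i := by
  have h0 := m.add_sub_le (i := ⟨0, i.pos⟩) (j := i) (Fin.le_def.2 (Nat.zero_le _))
  have h1 := (m.prop.2 ⟨0, i.pos⟩).1
  simp only at h0
  omega

theorem exists_first_ne (m : Idn d n) (h : ∃ i : Fin d, m.val i ≠ i + 1) :
    ∃ a : Fin d, m.val a ≠ a + 1 ∧ ∀ i : Fin d, i < a → m.val i = i + 1 := by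
  obtain ⟨a, ha, hmin⟩ := wellFounded_lt.has_min {i : Fin d | m.val i ≠ i + 1} h
  exact ⟨a, ha, fun i hi => by_contra fun hne => hmin i hne hi⟩

def lowerPrefix (m : Idn d n) (a : Fin d) : Idn d n :=
  ⟨fun i => if i ≤ a then (i : ℕ) + 1 else m.val i, by
    refine ⟨fun i j hij => ?_, fun i => ?_⟩
    · have := m.prop.1 hij
      have := m.succ_le j
      have := Fin.lt_def.1 hij
      dsimp only
      split_ifs with hi hj <;> simp only [Fin.le_def] at * <;> omega
    · have := m.prop.2 i
      have := m.succ_le i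
      dsimp only
      split_ifs <;> omega⟩

def bot (hdn : d ≤ n) : Idn d n :=
  ⟨fun i => i + 1, fun _ _ h => Nat.succ_lt_succ h, fun i => by
    have := i.isLt
    constructor <;> dsimp only <;> omega⟩

/-- The join-irreducible `I_{a,t} = [1, …, a, t+1, …, t+d-a]` (with `a` a `0`-based index);
the minimum when these entries do not fit. -/
def joinIrr (hdn : d ≤ n) (a : Fin d) (t : ℕ) : Idn d n :=
  if h : (a : ℕ) ≤ t ∧ t + d ≤ n + a then
    ⟨fun i => if (i : ℕ) < a then (i : ℕ) + 1 else t + 1 + (i - a), by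
      refine ⟨fun i j hij => ?_, fun i => ?_⟩
      · have := Fin.lt_def.1 hij
        dsimp only
        split_ifs <;> omega
      · have := i.isLt
        dsimp only
        split_ifs <;> omega⟩
  else bot hdn

section joinIrr

variable {hdn : d ≤ n} {a : Fin d} {t : ℕ}

theorem joinIrr_val (h : (a : ℕ) ≤ t ∧ t + d ≤ n + a) (i : Fin d) :
    (joinIrr hdn a t).val i = if (i : ℕ) < a then (i : ℕ) + 1 else t + 1 + (i - a) := by
  unfold joinIrr
  exact congrFun (congrArg Subtype.val (dif_pos h)) i

theorem joinIrr_val_self (h : (a : ℕ) ≤ t ∧ t + d ≤ n + a) : (joinIrr hdn a t).val a = t + 1 := by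
  simp [joinIrr_val h]

theorem fits_of_lt_val (J : Idn d n) (hat : (a : ℕ) ≤ t) (htJ : t < J.val a) :
    (a : ℕ) ≤ t ∧ t + d ≤ n + a := by
  have hgap := J.add_sub_le (i := a) (j := lastIdx d a.pos)
    (Fin.le_def.2 (by simp only [lastIdx]; omega))
  have hn := (J.prop.2 (lastIdx d a.pos)).2
  simp only [lastIdx] at hgap hn
  omega

theorem joinIrr_le_iff (h : (a : ℕ) ≤ t ∧ t + d ≤ n + a) (J : Idn d n) :
    idnLE (joinIrr hdn a t) J ↔ t < J.val a := by
  refine ⟨fun hle => by simpa [joinIrr_val_self h] using hle a, fun htJ i => ?_⟩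
  rw [joinIrr_val h]
  split_ifs with hia
  · exact J.succ_le i
  · have := J.add_sub_le (i := a) (j := i) (Fin.le_def.2 (by omega))
    omega

theorem eq_joinIrr_of_le (h : (a : ℕ) ≤ t ∧ t + d ≤ n + a) {x : Idn d n}
    (hle : idnLE x (joinIrr hdn a t)) (hxa : x.val a = t + 1) : x = joinIrr hdn a t := by
  refine Subtype.ext (funext fun i => ?_)
  have hub := hle i
  rw [joinIrr_val h] at hub ⊢
  split_ifs at hub ⊢ with hia
  · have := x.succ_le i
    omega
  · have := x.add_sub_le (i := a) (j := i) (Fin.le_def.2 (by omega))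
    omega

theorem idnJI_joinIrr (h : (a : ℕ) ≤ t ∧ t + d ≤ n + a) : idnJI (joinIrr hdn a t) := by
  intro x y hxy
  have hval : ∀ i, (joinIrr hdn a t).val i = max (x.val i) (y.val i) := by
    intro i; rw [hxy]; rfl
  have hx : idnLE x (joinIrr hdn a t) := fun i => (hval i).symm ▸ le_max_left _ _
  have hy : idnLE y (joinIrr hdn a t) := fun i => (hval i).symm ▸ le_max_right _ _
  rcases max_choice (x.val a) (y.val a) with hc | hc
  · exact Or.inl (eq_joinIrr_of_le h hx (by rw [← hc, ← hval, joinIrr_val_self h])).symm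
  · exact Or.inr (eq_joinIrr_of_le h hy (by rw [← hc, ← hval, joinIrr_val_self h])).symm

theorem joinIrr_injOn {b : Fin d} {u : ℕ} (h : (a : ℕ) ≤ t ∧ t + d ≤ n + a)
    (h' : (b : ℕ) ≤ u ∧ u + d ≤ n + b) (hat : (a : ℕ) < t) (hbu : (b : ℕ) < u)
    (heq : joinIrr hdn a t = joinIrr hdn b u) : a = b ∧ t = u := by
  have hva := congrArg (fun x : Idn d n => x.val a) heq
  have hvb := congrArg (fun x : Idn d n => x.val b) heq
  simp only [joinIrr_val h, joinIrr_val h'] at hva hvb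
  have hab : a = b := by
    apply Fin.ext
    split_ifs at hva hvb <;> omega
  subst hab
  simp only [lt_irrefl, if_false] at hva
  exact ⟨rfl, by omega⟩

theorem eq_joinIrr_of_idnJI {m : Idn d n} (hm : idnJI m) (ha : m.val a ≠ a + 1)
    (hlow : ∀ i : Fin d, i < a → m.val i = i + 1) :
    m = joinIrr hdn a (m.val a - 1) := by
  have hma := m.succ_le a
  have hfit := fits_of_lt_val m (a := a) (t := m.val a - 1) (by omega) (by omega)
  have hle := (joinIrr_le_iff (hdn := hdn) hfit m).2 (by omega)
  -- `m = I_{a,t} ⊔ lowerPrefix m a`, and `m ≠ lowerPrefix m a` at position `a`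
  have hjoin : m = idnJoin (joinIrr hdn a (m.val a - 1)) (m.lowerPrefix a) := by
    refine Subtype.ext (funext fun i => ?_)
    show m.val i = max _ (if i ≤ a then (i : ℕ) + 1 else m.val i)
    have hi := hle i
    rw [joinIrr_val hfit] at hi ⊢
    rcases lt_trichotomy i a with hia | rfl | hia
    · rw [if_pos (Fin.lt_def.1 hia), if_pos hia.le, max_self, hlow i hia]
    · rw [if_neg (lt_irrefl _), if_pos le_rfl, Nat.sub_self, add_zero]
      omega
    · rw [if_neg (not_lt.2 (Fin.le_def.1 hia.le))] at hi ⊢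
      rw [if_neg (not_le.2 hia), max_eq_right hi]
  rcases hm _ _ hjoin with h | h
  · exact h
  · have := congrArg (fun x : Idn d n => x.val a) h
    simp only [lowerPrefix, le_refl, if_true] at this
    exact absurd this ha

end joinIrr

end Idn

section

variable {d n : ℕ}

def idnSpec (J : Idn d n) : Set (Idn d n) := {x | idnJI x ∧ idnLE x J}

/-- `ω(I_{a,t}) = ε_{t+1} - ε_t`, read off at the first entry `m_a = t + 1` of `m` that differs
from the minimum. -/
def IsRootWeighting (ω : Idn d n → ℕ → ℝ) : Prop :=
  ∀ m : Idn d n, idnJI m → ∀ s : Fin d,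
    (∀ r : Fin d, (r : ℕ) < (s : ℕ) → m.val r = (r : ℕ) + 1) →
    m.val s ≠ (s : ℕ) + 1 →
    ω m = vecEps (m.val s) - vecEps (m.val s - 1)

theorem IsRootWeighting.apply_joinIrr {ω : Idn d n → ℕ → ℝ} (hω : IsRootWeighting ω)
    (hdn : d ≤ n) {a : Fin d} {t : ℕ} (h : (a : ℕ) ≤ t ∧ t + d ≤ n + a) (hat : (a : ℕ) < t) :
    ω (Idn.joinIrr hdn a t) = vecEps (t + 1) - vecEps t := by
  have hω' := hω _ (Idn.idnJI_joinIrr (hdn := hdn) h) a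
    (fun i hi => by rw [Idn.joinIrr_val h, if_pos hi]) (by rw [Idn.joinIrr_val_self h]; omega)
  rwa [Idn.joinIrr_val_self h, Nat.add_sub_cancel] at hω'

theorem idnSpec_diff_eq_image (hdn : d ≤ n) (J J' : Idn d n) :
    idnSpec J \ idnSpec J' = (fun p : (_ : Fin d) × ℕ => Idn.joinIrr hdn p.1 p.2) ''
      ↑(Finset.univ.sigma fun a => Finset.Ico (J'.val a) (J.val a)) := by
  ext m
  simp only [Set.mem_sdiff, idnSpec, Set.mem_ofPred_eq, Set.mem_image, Finset.coe_sigma,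
    Set.mem_sigma_iff, Finset.coe_univ, Set.mem_univ, Finset.coe_Ico, Set.mem_Ico, true_and]
  constructor
  · rintro ⟨⟨hm, hmJ⟩, hmJ'⟩
    have hne : ∃ i : Fin d, m.val i ≠ i + 1 := by
      by_contra! hbot
      exact hmJ' ⟨hm, fun i => (hbot i).trans_le (J'.succ_le i)⟩
    obtain ⟨a, ha, hlow⟩ := m.exists_first_ne hne
    have hm_eq := Idn.eq_joinIrr_of_idnJI (hdn := hdn) hm ha hlow
    have hma := m.succ_le a
    have hfit := Idn.fits_of_lt_val m (a := a) (t := m.val a - 1) (by omega) (by omega)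
    have hmJ'' : ¬ idnLE m J' := fun h => hmJ' ⟨hm, h⟩
    rw [hm_eq, Idn.joinIrr_le_iff hfit] at hmJ hmJ''
    refine ⟨⟨a, m.val a - 1⟩, ⟨?_, hmJ⟩, hm_eq.symm⟩
    dsimp only
    omega
  · rintro ⟨⟨a, t⟩, ⟨hJ't, htJ⟩, rfl⟩
    dsimp only at hJ't htJ ⊢
    have hfit := Idn.fits_of_lt_val J (a := a) (t := t) (by have := J'.succ_le a; omega) htJ
    rw [Idn.joinIrr_le_iff hfit, Idn.joinIrr_le_iff hfit]
    exact ⟨⟨Idn.idnJI_joinIrr hfit, htJ⟩, fun h => by omega⟩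

theorem finsum_idnSpec_diff (hdn : d ≤ n) {ω : Idn d n → ℕ → ℝ} (hω : IsRootWeighting ω)
    {J J' : Idn d n} (hle : idnLE J' J) :
    ∑ᶠ m ∈ idnSpec J \ idnSpec J', ω m = ∑ a, (vecEps (J.val a) - vecEps (J'.val a)) := by
  have hlow : ∀ a : Fin d, ∀ t ∈ Finset.Ico (J'.val a) (J.val a),
      (a : ℕ) < t ∧ (a : ℕ) ≤ t ∧ t + d ≤ n + a := fun a t ht => by
    rw [Finset.mem_Ico] at ht
    have := J'.succ_le a
    exact ⟨by omega, Idn.fits_of_lt_val J (by omega) ht.2⟩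
  have hinj : Set.InjOn (fun p : (_ : Fin d) × ℕ => Idn.joinIrr hdn p.1 p.2)
      ↑(Finset.univ.sigma fun a => Finset.Ico (J'.val a) (J.val a)) := by
    rintro ⟨a, t⟩ hp ⟨b, u⟩ hq heq
    simp only [Finset.coe_sigma, Set.mem_sigma_iff, Finset.mem_coe] at hp hq
    obtain ⟨ha, hfa⟩ := hlow a t hp.2
    obtain ⟨hb, hfb⟩ := hlow b u hq.2
    obtain ⟨rfl, rfl⟩ := Idn.joinIrr_injOn hfa hfb ha hb heq
    rfl
  rw [idnSpec_diff_eq_image hdn, finsum_mem_image hinj, finsum_mem_coe_finset, Finset.sum_sigma]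
  refine Finset.sum_congr rfl fun a _ => ?_
  rw [Finset.sum_congr rfl fun t ht => hω.apply_joinIrr hdn (hlow a t ht).2 (hlow a t ht).1,
    Finset.sum_Ico_sub _ (hle a)]

/-- `J' = p(J)` is the image of `J` under the pairing map and `s = s(J)`. -/
def IsPairingStep (J J' : Idn d n) (s : ℕ) : Prop :=
  (∀ t : Fin d, (t : ℕ) < s → J.val t = (t : ℕ) + 1) ∧
  (∀ ht : s < d, J.val ⟨s, ht⟩ ≠ s + 1) ∧
  (∀ t : Fin d, (t : ℕ) ≤ s → J'.val t = (t : ℕ) + 1) ∧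
  (∀ t : Fin d, s < (t : ℕ) → J'.val t =
    J.val ⟨(t : ℕ) - 1, lt_of_le_of_lt (Nat.sub_le _ _) t.isLt⟩)

namespace IsPairingStep

variable {J J' : Idn d n} {s : ℕ}

theorem lt (h : IsPairingStep J J' s) (hJ : ∃ t : Fin d, J.val t ≠ t + 1) : s < d := by
  obtain ⟨t, ht⟩ := hJ
  by_contra! hds
  exact ht (h.1 t (by omega))

theorem le (h : IsPairingStep J J' s) : idnLE J' J := by
  intro t
  rcases le_or_gt (t : ℕ) s with hts | hst
  · rw [h.2.2.1 t hts]
    exact J.succ_le t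
  · rw [h.2.2.2 t hst]
    exact le_of_lt (J.prop.1 (Fin.lt_def.2 (by simp only; omega)))

theorem succ_le_last (h : IsPairingStep J J' s) (hd : 0 < d) (hs : s < d) :
    d + 1 ≤ J.val (lastIdx d hd) := by
  have hJs := J.succ_le ⟨s, hs⟩
  have hne := h.2.1 hs
  have hgap := J.add_sub_le (i := ⟨s, hs⟩) (j := lastIdx d hd)
    (Fin.le_def.2 (by simp only [lastIdx]; omega))
  simp only [lastIdx] at hJs hgap ⊢
  omega

theorem last_lt (h : IsPairingStep J J' s) (hd : 0 < d) (hJ' : ∃ t : Fin d, J'.val t ≠ t + 1) :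
    J'.val (lastIdx d hd) < J.val (lastIdx d hd) := by
  have hs : s < d - 1 := by
    obtain ⟨t, ht⟩ := hJ'
    by_contra! hds
    exact ht (h.2.2.1 t (by omega))
  rw [h.2.2.2 (lastIdx d hd) (by simp only [lastIdx]; omega)]
  exact J.prop.1 (Fin.lt_def.2 (by simp only [lastIdx]; omega))

theorem lt_of_isPairingStep {J'' : Idn d n} {s' : ℕ} (h : IsPairingStep J J' s)
    (h' : IsPairingStep J' J'' s') (hJ' : ∃ t : Fin d, J'.val t ≠ t + 1) : s < s' := by
  have hs' := h'.lt hJ'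
  by_contra! hle
  exact h'.2.1 hs' (h.2.2.1 ⟨s', hs'⟩ hle)

theorem sum_vecEps_sub (h : IsPairingStep J J' s) (hd : 0 < d) (hs : s < d) :
    ∑ a, (vecEps (J.val a) - vecEps (J'.val a)) =
      vecEps (J.val (lastIdx d hd)) - vecEps (s + 1) := by
  obtain ⟨d, rfl⟩ : ∃ d', d = d' + 1 := ⟨d - 1, by omega⟩
  -- `J'` is `J` without its last entry, with `s + 1` inserted at position `s`
  have hJ' : ∀ i : Fin d, J'.val ((⟨s, hs⟩ : Fin (d + 1)).succAbove i) = J.val i.castSucc := by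
    intro i
    rcases lt_or_ge (i : ℕ) s with his | hsi
    · rw [Fin.succAbove_of_castSucc_lt _ _ (show i.castSucc < ⟨s, hs⟩ from Fin.lt_def.2 his),
        h.2.2.1 _ his.le, h.1 _ his]
    · rw [Fin.succAbove_of_le_castSucc _ _ (show ⟨s, hs⟩ ≤ i.castSucc from Fin.le_def.2 hsi),
        h.2.2.2 _ (by rw [Fin.val_succ]; omega)]
      rfl
  rw [Finset.sum_sub_distrib, Fin.sum_univ_castSucc, Fin.sum_univ_succAbove _ ⟨s, hs⟩,
    h.2.2.1 ⟨s, hs⟩ le_rfl]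
  simp only [hJ']
  have hlast : lastIdx (d + 1) hd = Fin.last d := rfl
  rw [hlast]
  abel

end IsPairingStep

end

theorem isAntichain_image_of_strictMonoOn_of_strictAntiOn {ι α β : Type*} [LinearOrder ι]
    [Preorder α] [Preorder β] {f : ι → α} {g : ι → β} {s : Set ι}
    (hf : StrictMonoOn f s) (hg : StrictAntiOn g s) :
    IsAntichain (· ≤ ·) ((fun i => (f i, g i)) '' s) := by
  rintro _ ⟨i, hi, rfl⟩ _ ⟨j, hj, rfl⟩ hne ⟨hfle, hgle⟩
  rcases lt_trichotomy i j with hij | rfl | hji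
  · exact (hg hi hj hij).not_ge hgle
  · exact hne rfl
  · exact (hf hj hi hji).not_ge hfle

theorem stmt16_general (d n : ℕ) (hd : 0 < d) (hdn : d ≤ n)
    (ω : Idn d n → ℕ → ℝ)
    (hω : ∀ m : Idn d n, idnJI m → ∀ s : Fin d,
      (∀ r : Fin d, (r : ℕ) < (s : ℕ) → m.val r = (r : ℕ) + 1) →
      m.val s ≠ (s : ℕ) + 1 →
      ω m = vecEps (m.val s) - vecEps (m.val s - 1))
    (k : ℕ) (Iseq : ℕ → Idn d n) (sfun : ℕ → ℕ)
    (hnotbot : ∀ r, r < k → ∃ t : Fin d, (Iseq r).val t ≠ (t : ℕ) + 1)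
    (hstep : ∀ r, r < k →
      (∀ t : Fin d, (t : ℕ) < sfun r → (Iseq r).val t = (t : ℕ) + 1) ∧
      (∀ ht : sfun r < d, (Iseq r).val ⟨sfun r, ht⟩ ≠ sfun r + 1) ∧
      (∀ t : Fin d, (t : ℕ) ≤ sfun r → (Iseq (r + 1)).val t = (t : ℕ) + 1) ∧
      (∀ t : Fin d, sfun r < (t : ℕ) → (Iseq (r + 1)).val t =
        (Iseq r).val ⟨(t : ℕ) - 1, lt_of_le_of_lt (Nat.sub_le _ _) t.isLt⟩)) :
    (∀ r, r < k →
      -- `β_{r+1}` is the root `α_{s+1, i_d − 1}`, an element of `R_{d,n}`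
      (1 ≤ sfun r + 1 ∧ sfun r + 1 ≤ d ∧
        d ≤ (Iseq r).val (lastIdx d hd) - 1 ∧ (Iseq r).val (lastIdx d hd) - 1 ≤ n - 1) ∧
      ∑ᶠ m ∈ {x : Idn d n | idnJI x ∧ idnLE x (Iseq r)} \
          {x : Idn d n | idnJI x ∧ idnLE x (Iseq (r + 1))}, ω m
        = vecEps ((Iseq r).val (lastIdx d hd)) - vecEps (sfun r + 1)) ∧
    -- `β(I)` is an antichain in `R_{d,n}`
    IsAntichain (· ≤ ·)
      {p : ℕ × ℕ | ∃ r, r < k ∧ p = (sfun r + 1, (Iseq r).val (lastIdx d hd) - 1)} := by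
  have hpair : ∀ r < k, IsPairingStep (Iseq r) (Iseq (r + 1)) (sfun r) := hstep
  have hs : ∀ r < k, sfun r < d := fun r hr => (hpair r hr).lt (hnotbot r hr)
  have hlast : ∀ r < k, d + 1 ≤ (Iseq r).val (lastIdx d hd) := fun r hr =>
    (hpair r hr).succ_le_last hd (hs r hr)
  refine ⟨fun r hr => ⟨?_, ?_⟩, ?_⟩
  · have := hlast r hr
    have := ((Iseq r).prop.2 (lastIdx d hd)).2
    exact ⟨by omega, hs r hr, by omega, by omega⟩
  · exact (finsum_idnSpec_diff hdn hω (hpair r hr).le).trans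
      ((hpair r hr).sum_vecEps_sub hd (hs r hr))
  · have hset : {p : ℕ × ℕ | ∃ r, r < k ∧ p = (sfun r + 1, (Iseq r).val (lastIdx d hd) - 1)} =
        (fun r => (sfun r + 1, (Iseq r).val (lastIdx d hd) - 1)) '' Set.Iio k := by
      ext p
      simp [eq_comm]
    rw [hset]
    apply isAntichain_image_of_strictMonoOn_of_strictAntiOn
    · refine strictMonoOn_of_lt_succ Set.ordConnected_Iio fun r _ hr hr' => ?_
      rw [Order.succ_eq_add_one] at hr' ⊢
      have := (hpair r hr).lt_of_isPairingStep (hpair (r + 1) hr') (hnotbot (r + 1) hr')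
      omega
    · refine strictAntiOn_of_succ_lt Set.ordConnected_Iio fun r _ hr hr' => ?_
      rw [Order.succ_eq_add_one] at hr' ⊢
      have := (hpair r hr).last_lt hd (hnotbot (r + 1) hr')
      have := hlast (r + 1) hr'
      omega

/-- let `I ∈ I(d,n)` and let `I = I_0, I_1, …, I_k = [1, …, d]` be the
iteration of the pairing map, `s r` the length of the maximal initial segment
`[1, …, s r]` of `I_r`.  Then for each `r < k` the vector
`β_{r+1} = ω(Spec I_r \ Spec I_{r+1}) = ε_{i_d} − ε_{s+1}` equals the root
`α_{s+1, i_d − 1}` of `R_{d,n}` (where `i_d` is the last entry of `I_r`), and the set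
`β(I)` of the corresponding pairs `(s r + 1, i_d − 1)` is an antichain of `R_{d,n}`. -/
theorem stmt16 (d n : ℕ) (hd : 0 < d) (hdn : d ≤ n)
    (ω : Idn d n → ℕ → ℝ)
    (hω0 : ∀ m : Idn d n, (∀ r : Fin d, m.val r = (r : ℕ) + 1) → ω m = 0)
    (hω : ∀ m : Idn d n, idnJI m → ∀ s : Fin d,
      (∀ r : Fin d, (r : ℕ) < (s : ℕ) → m.val r = (r : ℕ) + 1) →
      m.val s ≠ (s : ℕ) + 1 →
      ω m = vecEps (m.val s) - vecEps (m.val s - 1))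
    (I : Idn d n) (k : ℕ) (Iseq : ℕ → Idn d n) (sfun : ℕ → ℕ)
    (hI0 : Iseq 0 = I)
    (hbot : ∀ r : Fin d, (Iseq k).val r = (r : ℕ) + 1)
    (hnotbot : ∀ r, r < k → ∃ t : Fin d, (Iseq r).val t ≠ (t : ℕ) + 1)
    (hstep : ∀ r, r < k →
      (∀ t : Fin d, (t : ℕ) < sfun r → (Iseq r).val t = (t : ℕ) + 1) ∧
      (∀ ht : sfun r < d, (Iseq r).val ⟨sfun r, ht⟩ ≠ sfun r + 1) ∧
      (∀ t : Fin d, (t : ℕ) ≤ sfun r → (Iseq (r + 1)).val t = (t : ℕ) + 1) ∧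
      (∀ t : Fin d, sfun r < (t : ℕ) → (Iseq (r + 1)).val t =
        (Iseq r).val ⟨(t : ℕ) - 1, lt_of_le_of_lt (Nat.sub_le _ _) t.isLt⟩)) :
    (∀ r, r < k →
      -- `β_{r+1}` is the root `α_{s+1, i_d − 1}`, an element of `R_{d,n}`
      (1 ≤ sfun r + 1 ∧ sfun r + 1 ≤ d ∧
        d ≤ (Iseq r).val (lastIdx d hd) - 1 ∧ (Iseq r).val (lastIdx d hd) - 1 ≤ n - 1) ∧
      ∑ᶠ m ∈ {x : Idn d n | idnJI x ∧ idnLE x (Iseq r)} \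
          {x : Idn d n | idnJI x ∧ idnLE x (Iseq (r + 1))}, ω m
        = vecEps ((Iseq r).val (lastIdx d hd)) - vecEps (sfun r + 1)) ∧
    -- `β(I)` is an antichain in `R_{d,n}`
    IsAntichain (· ≤ ·)
      {p : ℕ × ℕ | ∃ r, r < k ∧ p = (sfun r + 1, (Iseq r).val (lastIdx d hd) - 1)} :=
  stmt16_general d n hd hdn ω hω k Iseq sfun hnotbot hstep
end

section
/- Let 1 ≤ d ≤ n. The map I ↦ χ_{β(I)} (the characteristic function of β(I) in ℝ^{R_{d,n}}) is a bijection from I(d,n) onto the set of integer points of the Feigin–Fourier–Littelmann–Vinberg polytope FFLV_{d,n}. In particular each χ_{β(I)} is a lattice point of FFLV_{d,n}, and distinct I give distinct lattice points. -/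
/-- The underlying set of the poset `R_{d,n}`: pairs `(i,j)` with `1 ≤ i ≤ d`,
`d ≤ j ≤ n−1` (the pair `(i,j)` encoding the root `α_{i,j}`). -/
def Rset (d n : ℕ) : Set (ℕ × ℕ) :=
  {p : ℕ × ℕ | 1 ≤ p.1 ∧ p.1 ≤ d ∧ d ≤ p.2 ∧ p.2 ≤ n - 1}

/-- `path` (of length `s`) is a Dyck path in `R_{d,n}`: it starts at some `α_{k,d}`,
ends at some `α_{d,t}`, and each step increases exactly one coordinate by `1`. -/
def IsDyck (d n : ℕ) (s : ℕ) (path : ℕ → ℕ × ℕ) : Prop :=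
  1 ≤ s ∧
  1 ≤ (path 0).1 ∧ (path 0).1 ≤ d ∧ (path 0).2 = d ∧
  (path (s - 1)).1 = d ∧ d ≤ (path (s - 1)).2 ∧ (path (s - 1)).2 ≤ n - 1 ∧
  ∀ r, r + 1 < s →
    (path (r + 1) = ((path r).1, (path r).2 + 1) ∨
     path (r + 1) = ((path r).1 + 1, (path r).2))

/-- Membership in the Feigin–Fourier–Littelmann–Vinberg polytope `FFLV_{d,n}`
(realized inside the functions `ℕ × ℕ → ℝ` supported on `R_{d,n}`): all coordinates are
nonnegative and every Dyck path sum is at most `1`. -/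
def FFLVmem (d n : ℕ) (x : ℕ × ℕ → ℝ) : Prop :=
  (∀ q : ℕ × ℕ, q ∉ Rset d n → x q = 0) ∧
  (∀ q : ℕ × ℕ, 0 ≤ x q) ∧
  ∀ (s : ℕ) (path : ℕ → ℕ × ℕ), IsDyck d n s path →
    ∑ r ∈ Finset.range s, x (path r) ≤ 1

/-- strict antichain -/
def SAC (S : Set (ℕ × ℕ)) : Prop :=
  ∀ a ∈ S, ∀ b ∈ S, a ≠ b → (a.1 < b.1 ∧ b.2 < a.2) ∨ (b.1 < a.1 ∧ a.2 < b.2)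

lemma idn_ge {d n : ℕ} (I : Idn d n) : ∀ k (hk : k < d), k + 1 ≤ I.val ⟨k, hk⟩ := by
  intro k
  induction k with
  | zero => intro hk; exact (I.2.2 ⟨0, hk⟩).1
  | succ m ih =>
    intro hk
    have h1 : m < d := by omega
    have := ih h1
    have hlt : I.val ⟨m, h1⟩ < I.val ⟨m + 1, hk⟩ := I.2.1 (by simp [Fin.lt_def])
    omega

lemma idn_gap {d n : ℕ} (I : Idn d n) :
    ∀ l (hl : l < d) k (hk : k ≤ l), I.val ⟨k, lt_of_le_of_lt hk hl⟩ + (l - k) ≤ I.val ⟨l, hl⟩ := by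
  intro l
  induction l with
  | zero => intro hl k hk; interval_cases k; simp
  | succ m ih =>
    intro hl k hk
    rcases Nat.eq_or_lt_of_le hk with h | h
    · subst h; simp
    · have h1 : m < d := by omega
      have h2 := ih h1 k (by omega)
      have hlt : I.val ⟨m, h1⟩ < I.val ⟨m + 1, hl⟩ := I.2.1 (by simp [Fin.lt_def])
      omega

lemma dyck_mono {d n s : ℕ} {path : ℕ → ℕ × ℕ} (h : IsDyck d n s path) :
    ∀ r' (_ : r' < s) r (_ : r ≤ r'),
      (path r).1 ≤ (path r').1 ∧ (path r).2 ≤ (path r').2 ∧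
      (path r).1 + (path r).2 + (r' - r) = (path r').1 + (path r').2 := by
  intro r'
  induction r' with
  | zero => intro _ r hr; interval_cases r; simp
  | succ m ih =>
    intro hm r hr
    rcases Nat.eq_or_lt_of_le hr with h' | h'
    · subst h'; simp
    · have h1 : m < s := by omega
      have h2 := ih h1 r (by omega)
      rcases h.2.2.2.2.2.2.2 m (by omega) with hc | hc <;> rw [hc] <;> simp <;> omega

def dpath (d : ℕ) (a b : ℕ × ℕ) : ℕ → ℕ × ℕ := fun r =>
  if r ≤ a.2 - d then (a.1, d + r)
  else if r ≤ a.2 - d + (b.1 - a.1) then (a.1 + (r - (a.2 - d)), a.2)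
  else if r ≤ a.2 - d + (b.1 - a.1) + (b.2 - a.2) then
    (b.1, a.2 + (r - (a.2 - d) - (b.1 - a.1)))
  else (b.1 + (r - (a.2 - d) - (b.1 - a.1) - (b.2 - a.2)), b.2)

lemma dpath_spec {d n : ℕ} (hd : 0 < d) (a b : ℕ × ℕ)
    (ha : a ∈ Rset d n) (hb : b ∈ Rset d n) (h1 : a.1 ≤ b.1) (h2 : a.2 ≤ b.2) :
    IsDyck d n ((a.2 - d) + (b.1 - a.1) + (b.2 - a.2) + (d - b.1) + 1) (dpath d a b) ∧
    dpath d a b (a.2 - d) = a ∧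
    dpath d a b ((a.2 - d) + (b.1 - a.1) + (b.2 - a.2)) = b := by
  obtain ⟨ha1, ha2, ha3, ha4⟩ := ha
  obtain ⟨hb1, hb2, hb3, hb4⟩ := hb
  refine ⟨⟨by omega, ?_, ?_, ?_, ?_, ?_, ?_, ?_⟩, ?_, ?_⟩
  · unfold dpath; split_ifs <;> simp <;> omega
  · unfold dpath; split_ifs <;> simp <;> omega
  · unfold dpath; split_ifs <;> simp <;> omega
  · unfold dpath; split_ifs <;> simp <;> omega
  · unfold dpath; split_ifs <;> simp <;> omega
  · unfold dpath; split_ifs <;> simp <;> omega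
  · intro r hr
    unfold dpath
    split_ifs <;> simp [Prod.ext_iff] <;> omega
  · unfold dpath; split_ifs <;> simp [Prod.ext_iff] <;> omega
  · unfold dpath; split_ifs <;> simp [Prod.ext_iff] <;> omega

/-- the map `I ↦ χ_{β(I)}` is a bijection from `I(d,n)` onto the set of
integer points of the FFLV polytope `FFLV_{d,n}`.  Here `β` is defined via the pairing
map `p`: `β([1,…,d]) = ∅` and `β(I) = {α_{s(I)+1, i_d − 1}} ∪ β(p I)`, where `s(I)` is
the length of the maximal initial segment `[1, …, s]` of `I` and `i_d` its last
entry. -/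
theorem stmt17 (d n : ℕ) (hd : 0 < d) (hdn : d ≤ n)
    (p : Idn d n → Idn d n) (sfun : Idn d n → ℕ)
    (hp : ∀ I : Idn d n, (∃ t : Fin d, I.val t ≠ (t : ℕ) + 1) →
      (∀ t : Fin d, (t : ℕ) < sfun I → I.val t = (t : ℕ) + 1) ∧
      (∀ ht : sfun I < d, I.val ⟨sfun I, ht⟩ ≠ sfun I + 1) ∧
      (∀ t : Fin d, (t : ℕ) ≤ sfun I → (p I).val t = (t : ℕ) + 1) ∧
      (∀ t : Fin d, sfun I < (t : ℕ) → (p I).val t =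
        I.val ⟨(t : ℕ) - 1, lt_of_le_of_lt (Nat.sub_le _ _) t.isLt⟩))
    (βs : Idn d n → Set (ℕ × ℕ))
    (hβbot : ∀ I : Idn d n, (∀ t : Fin d, I.val t = (t : ℕ) + 1) → βs I = ∅)
    (hβ : ∀ I : Idn d n, (∃ t : Fin d, I.val t ≠ (t : ℕ) + 1) →
      βs I = insert (sfun I + 1, I.val (lastIdx d hd) - 1) (βs (p I))) :
    Set.BijOn (fun I : Idn d n => Set.indicator (βs I) (fun _ => (1 : ℝ)))
      Set.univ
      {x : ℕ × ℕ → ℝ | FFLVmem d n x ∧ ∀ q : ℕ × ℕ, ∃ z : ℤ, x q = (z : ℝ)} := by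
  classical
  set li : Fin d := lastIdx d hd with hli
  have hlid : (li : ℕ) = d - 1 := rfl
  -- the bottom element
  let Ibot : Idn d n := ⟨fun t => (t : ℕ) + 1,
    fun a b hab => by simpa using (Fin.lt_def.1 hab),
    fun t => ⟨by show 1 ≤ (t : ℕ) + 1; omega, by show (t : ℕ) + 1 ≤ n; have := t.isLt; omega⟩⟩
  have hIbotval : ∀ t : Fin d, Ibot.val t = (t : ℕ) + 1 := fun t => rfl
  -- every I satisfies d ≤ last value; if last value ≤ d then I is bottom
  have hbot_last : ∀ I : Idn d n, I.val li ≤ d → ∀ t : Fin d, I.val t = (t : ℕ) + 1 := by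
    intro I h t
    have h1 : (t : ℕ) + 1 ≤ I.val t := idn_ge I t t.isLt
    have h2 : I.val t + (d - 1 - (t : ℕ)) ≤ I.val li :=
      idn_gap I (d - 1) (Nat.sub_lt hd one_pos) t (by have := t.isLt; omega)
    have h3 := t.isLt
    omega
  have hlast_big : ∀ I : Idn d n, (∃ t : Fin d, I.val t ≠ (t : ℕ) + 1) →
      d + 1 ≤ I.val li := by
    intro I hne
    obtain ⟨t, ht⟩ := hne
    by_contra h
    push_neg at h
    exact ht (hbot_last I (by omega) t)
  have hs_lt : ∀ I : Idn d n, (∃ t : Fin d, I.val t ≠ (t : ℕ) + 1) → sfun I < d := by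
    intro I hne
    by_contra h
    push_neg at h
    obtain ⟨t, ht⟩ := id hne
    exact ht ((hp I hne).1 t (by have := t.isLt; omega))
  have hsfun_eq : ∀ I : Idn d n, (∃ t : Fin d, I.val t ≠ (t : ℕ) + 1) →
      ∀ (s : ℕ) (hs : s < d), (∀ t : Fin d, (t : ℕ) < s → I.val t = (t : ℕ) + 1) →
      I.val ⟨s, hs⟩ ≠ s + 1 → sfun I = s := by
    intro I hne s hs hlow hne2
    rcases lt_trichotomy (sfun I) s with h | h | h
    · exact absurd (hlow ⟨sfun I, by omega⟩ h) ((hp I hne).2.1 (by omega))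
    · exact h
    · exact absurd ((hp I hne).1 ⟨s, hs⟩ h) hne2
  have hplast : ∀ I : Idn d n, (∃ t : Fin d, I.val t ≠ (t : ℕ) + 1) →
      (p I).val li < I.val li := by
    intro I hne
    have hs := hs_lt I hne
    rcases Nat.lt_or_ge (sfun I) (d - 1) with h | h
    · have h4 := (hp I hne).2.2.2 li (by show sfun I < (li : ℕ); omega)
      rw [h4]
      apply I.2.1
      show (⟨(li : ℕ) - 1, _⟩ : Fin d) < li
      rw [Fin.lt_def]
      show (li : ℕ) - 1 < (li : ℕ)
      omega
    · have h3 := (hp I hne).2.2.1 li (by show (li : ℕ) ≤ sfun I; omega)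
      rw [h3]
      have := hlast_big I hne
      omega
  -- the structural lemma
  have struct : ∀ N, ∀ I : Idn d n, I.val li ≤ N →
      (∀ b ∈ βs I, b ∈ Rset d n ∧ b.2 + 1 ≤ I.val li) ∧
      ((∃ t : Fin d, I.val t ≠ (t : ℕ) + 1) → ∀ b ∈ βs I, sfun I + 1 ≤ b.1) ∧
      SAC (βs I) := by
    intro N
    induction N using Nat.strong_induction_on with
    | _ N ih =>
    intro I hIN
    by_cases hb : ∀ t : Fin d, I.val t = (t : ℕ) + 1
    · rw [hβbot I hb]
      exact ⟨by simp, by simp, fun a ha => absurd ha (Set.notMem_empty a)⟩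
    · push_neg at hb
      have hLd : d + 1 ≤ I.val li := hlast_big I hb
      have hsd : sfun I < d := hs_lt I hb
      have hpl : (p I).val li < I.val li := hplast I hb
      have hN1 : (p I).val li < N := by omega
      have hih := ih ((p I).val li) hN1 (p I) le_rfl
      have hrec := hβ I hb
      have hpid : ∀ t : Fin d, (t : ℕ) ≤ sfun I → (p I).val t = (t : ℕ) + 1 :=
        (hp I hb).2.2.1
      have hsub : ∀ b ∈ βs (p I), sfun I + 2 ≤ b.1 ∧ b.2 + 2 ≤ I.val li := by
        intro b hbmem
        have hpne : ∃ t : Fin d, (p I).val t ≠ (t : ℕ) + 1 := by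
          by_contra h
          push_neg at h
          rw [hβbot (p I) h] at hbmem
          exact absurd hbmem (Set.notMem_empty b)
        have h1 := hih.2.1 hpne b hbmem
        have h2 := (hih.1 b hbmem).2
        have h3 : sfun I + 1 ≤ sfun (p I) := by
          by_contra h
          push_neg at h
          exact (hp (p I) hpne).2.1 (by omega)
            (hpid ⟨sfun (p I), by omega⟩ (by show sfun (p I) ≤ sfun I; omega))
        exact ⟨by omega, by omega⟩
      have hRa : (sfun I + 1, I.val li - 1) ∈ Rset d n := by
        have h1 := (I.2.2 li).2
        exact ⟨by omega, by omega, by omega, by omega⟩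
      rw [hrec]
      refine ⟨?_, ?_, ?_⟩
      · intro b hbmem
        rcases Set.mem_insert_iff.1 hbmem with h | h
        · subst h
          exact ⟨hRa, by show I.val li - 1 + 1 ≤ I.val li; omega⟩
        · exact ⟨(hih.1 b h).1, by have := (hsub b h).2; omega⟩
      · intro _ b hbmem
        rcases Set.mem_insert_iff.1 hbmem with h | h
        · subst h; exact le_rfl
        · have := (hsub b h).1; omega
      · intro a ha b hbmem hab
        rcases Set.mem_insert_iff.1 ha with h | h <;>
          rcases Set.mem_insert_iff.1 hbmem with h' | h'
        · exact absurd (h.trans h'.symm) hab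
        · left
          subst h
          have := hsub b h'
          constructor
          · show sfun I + 1 < b.1; omega
          · show b.2 < I.val li - 1; omega
        · right
          subst h'
          have := hsub a h
          constructor
          · show sfun I + 1 < a.1; omega
          · show a.2 < I.val li - 1; omega
        · exact hih.2.2 a h b h' hab
  -- first coordinates in βs (p I) are large
  have hpfst : ∀ I : Idn d n, (∃ t : Fin d, I.val t ≠ (t : ℕ) + 1) →
      ∀ b ∈ βs (p I), sfun I + 2 ≤ b.1 := by
    intro I hne b hbmem
    have hpne : ∃ t : Fin d, (p I).val t ≠ (t : ℕ) + 1 := by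
      by_contra h
      push_neg at h
      rw [hβbot (p I) h] at hbmem
      exact absurd hbmem (Set.notMem_empty b)
    have h1 := (struct ((p I).val li) (p I) le_rfl).2.1 hpne b hbmem
    have h3 : sfun I + 1 ≤ sfun (p I) := by
      by_contra h
      push_neg at h
      have hsd := hs_lt I hne
      exact (hp (p I) hpne).2.1 (by omega)
        ((hp I hne).2.2.1 ⟨sfun (p I), by omega⟩ (by show sfun (p I) ≤ sfun I; omega))
    omega
  -- injectivity of βs
  have βinj : ∀ N, ∀ I J : Idn d n, I.val li ≤ N → βs I = βs J → I = J := by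
    intro N
    induction N using Nat.strong_induction_on with
    | _ N ih =>
    intro I J hIN hIJ
    by_cases hbI : ∀ t : Fin d, I.val t = (t : ℕ) + 1 <;>
      by_cases hbJ : ∀ t : Fin d, J.val t = (t : ℕ) + 1
    · exact Subtype.ext (funext fun t => by rw [hbI t, hbJ t])
    · exfalso
      push_neg at hbJ
      rw [hβbot I hbI, hβ J hbJ] at hIJ
      exact (Set.insert_nonempty _ _).ne_empty hIJ.symm
    · exfalso
      push_neg at hbI
      rw [hβbot J hbJ, hβ I hbI] at hIJ
      exact (Set.insert_nonempty _ _).ne_empty hIJ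
    · push_neg at hbI
      push_neg at hbJ
      have hrI := hβ I hbI
      have hrJ := hβ J hbJ
      have haIJ : (sfun I + 1, I.val li - 1) = (sfun J + 1, J.val li - 1) := by
        have h1 : (sfun I + 1, I.val li - 1) ∈ insert (sfun J + 1, J.val li - 1) (βs (p J)) := by
          rw [← hrJ, ← hIJ, hrI]; exact Set.mem_insert _ _
        have h2 : (sfun J + 1, J.val li - 1) ∈ insert (sfun I + 1, I.val li - 1) (βs (p I)) := by
          rw [← hrI, hIJ, hrJ]; exact Set.mem_insert _ _
        rcases Set.mem_insert_iff.1 h1 with h | h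
        · exact h
        · rcases Set.mem_insert_iff.1 h2 with h' | h'
          · exact h'.symm
          · exfalso
            have e1 := hpfst J hbJ _ h
            have e2 := hpfst I hbI _ h'
            simp only [Prod.fst] at e1 e2
            omega
      have hsind : sfun I = sfun J := by
        have := congrArg Prod.fst haIJ
        simpa using this
      have hlval : I.val li = J.val li := by
        have h0 := congrArg Prod.snd haIJ
        simp only [Prod.snd] at h0
        have hbig1 := hlast_big I hbI
        have hbig2 := hlast_big J hbJ
        omega
      have hpeq : βs (p I) = βs (p J) := by
        ext q
        constructor
        · intro hq
          have hmem : q ∈ insert (sfun J + 1, J.val li - 1) (βs (p J)) := by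
            rw [← hrJ, ← hIJ, hrI]; exact Set.mem_insert_of_mem _ hq
          rcases Set.mem_insert_iff.1 hmem with h | h
          · exfalso
            have := hpfst I hbI q hq
            rw [h] at this
            simp only [Prod.fst] at this
            omega
          · exact h
        · intro hq
          have hmem : q ∈ insert (sfun I + 1, I.val li - 1) (βs (p I)) := by
            rw [← hrI, hIJ, hrJ]; exact Set.mem_insert_of_mem _ hq
          rcases Set.mem_insert_iff.1 hmem with h | h
          · exfalso
            have := hpfst J hbJ q hq
            rw [h] at this
            simp only [Prod.fst] at this
            omega
          · exact h
      have hppI : p I = p J := by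
        have hpl := hplast I hbI
        exact ih ((p I).val li) (by omega) (p I) (p J) le_rfl hpeq
      apply Subtype.ext
      funext t
      by_cases h1 : (t : ℕ) < sfun I
      · rw [(hp I hbI).1 t h1, (hp J hbJ).1 t (by omega)]
      · by_cases h2 : (t : ℕ) = d - 1
        · have ht : t = li := Fin.ext (by rw [hlid]; exact h2)
          rw [ht]; exact hlval
        · have htlt : (t : ℕ) + 1 < d := by have := t.isLt; omega
          have e1 : (p I).val ⟨(t : ℕ) + 1, htlt⟩ = I.val t :=
            (hp I hbI).2.2.2 ⟨(t : ℕ) + 1, htlt⟩ (by show sfun I < (t : ℕ) + 1; omega)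
          have e2 : (p J).val ⟨(t : ℕ) + 1, htlt⟩ = J.val t :=
            (hp J hbJ).2.2.2 ⟨(t : ℕ) + 1, htlt⟩ (by show sfun J < (t : ℕ) + 1; omega)
          rw [← e1, ← e2, hppI]
  -- surjectivity onto strict antichains
  have βsurj : ∀ k (S : Set (ℕ × ℕ)) (hfin : S.Finite), hfin.toFinset.card ≤ k →
      S ⊆ Rset d n → SAC S → ∃ I : Idn d n, βs I = S := by
    intro k
    induction k with
    | zero =>
      intro S hfin hcard hsub hsac
      have hS : S = ∅ := by
        have h0 : hfin.toFinset = ∅ := Finset.card_eq_zero.1 (Nat.le_zero.1 hcard)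
        rwa [Set.Finite.toFinset_eq_empty] at h0
      exact ⟨Ibot, by rw [hS]; exact hβbot Ibot hIbotval⟩
    | succ k ihk =>
      intro S hfin hcard hsub hsac
      by_cases hS : S = ∅
      · exact ⟨Ibot, by rw [hS]; exact hβbot Ibot hIbotval⟩
      · obtain ⟨a, haS, hamin⟩ : ∃ a ∈ S, ∀ b ∈ S, a.1 ≤ b.1 := by
          obtain ⟨a, ha, hmin⟩ := Finset.exists_min_image hfin.toFinset Prod.fst
            (by rw [Set.Finite.toFinset_nonempty]; exact Set.nonempty_iff_ne_empty.2 hS)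
          exact ⟨a, hfin.mem_toFinset.1 ha, fun b hb => hmin b (hfin.mem_toFinset.2 hb)⟩
        have hstrict : ∀ b ∈ S, b ≠ a → a.1 < b.1 ∧ b.2 < a.2 := by
          intro b hb hba
          rcases hsac a haS b hb (Ne.symm hba) with h | h
          · exact h
          · exact absurd (hamin b hb) (by omega)
        obtain ⟨ha1, ha2, ha3, ha4⟩ := hsub haS
        have hfin' : (S \ {a}).Finite := hfin.subset Set.diff_subset
        have hcard' : hfin'.toFinset.card ≤ k := by
          have hsubset : hfin'.toFinset ⊆ hfin.toFinset.erase a := by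
            intro q hq
            rw [Set.Finite.mem_toFinset] at hq
            rw [Finset.mem_erase, Set.Finite.mem_toFinset]
            exact ⟨by simpa using hq.2, hq.1⟩
          have hc1 := Finset.card_le_card hsubset
          have hc2 : a ∈ hfin.toFinset := hfin.mem_toFinset.2 haS
          have hc3 := Finset.card_erase_of_mem hc2
          have hc4 : 1 ≤ hfin.toFinset.card := Finset.card_pos.2 ⟨a, hc2⟩
          omega
        obtain ⟨I', hI'⟩ := ihk (S \ {a}) hfin' hcard'
          (fun q hq => hsub hq.1) (fun a' ha' b' hb' => hsac a' ha'.1 b' hb'.1)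
        have hdiffne : ∀ b : ℕ × ℕ, b ∈ S \ {a} → b ≠ a := by
          intro b hb
          simpa using hb.2
        have hI'fst : ∀ b ∈ S \ {a}, a.1 + 1 ≤ b.1 :=
          fun b hb => (hstrict b hb.1 (hdiffne b hb)).1
        have hI'low : ∀ u : Fin d, (u : ℕ) < a.1 → I'.val u = (u : ℕ) + 1 := by
          intro u hu
          by_cases hbI' : ∀ t : Fin d, I'.val t = (t : ℕ) + 1
          · exact hbI' u
          · push_neg at hbI'
            have hmem' : (sfun I' + 1, I'.val li - 1) ∈ S \ {a} := by
              rw [← hI', hβ I' hbI']; exact Set.mem_insert _ _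
            have := hI'fst _ hmem'
            simp only [Prod.fst] at this
            exact (hp I' hbI').1 u (by omega)
        have hI'last : I'.val li ≤ a.2 := by
          by_cases hbI' : ∀ t : Fin d, I'.val t = (t : ℕ) + 1
          · rw [hbI' li, hlid]; omega
          · push_neg at hbI'
            have hmem' : (sfun I' + 1, I'.val li - 1) ∈ S \ {a} := by
              rw [← hI', hβ I' hbI']; exact Set.mem_insert _ _
            have h2 := (hstrict _ hmem'.1 (hdiffne _ hmem')).2
            simp only [Prod.snd] at h2
            have h3 := hlast_big I' hbI'
            omega
        -- define the new I
        set f : Fin d → ℕ := fun t =>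
          if (t : ℕ) + 1 < a.1 then (t : ℕ) + 1
          else if h : (t : ℕ) + 1 < d then I'.val ⟨(t : ℕ) + 1, h⟩ else a.2 + 1
          with hf
        have hfval1 : ∀ t : Fin d, (t : ℕ) + 1 < a.1 → f t = (t : ℕ) + 1 := by
          intro t ht; rw [hf]; simp only; rw [if_pos ht]
        have hfval2 : ∀ t : Fin d, ¬ ((t : ℕ) + 1 < a.1) → ∀ h : (t : ℕ) + 1 < d,
            f t = I'.val ⟨(t : ℕ) + 1, h⟩ := by
          intro t ht h; rw [hf]; simp only; rw [if_neg ht, dif_pos h]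
        have hfval3 : ∀ t : Fin d, ¬ ((t : ℕ) + 1 < d) → f t = a.2 + 1 := by
          intro t ht; rw [hf]; simp only
          rw [if_neg (by have := t.isLt; omega), dif_neg ht]
        have hfge : ∀ t : Fin d, (t : ℕ) + 1 ≤ f t := by
          intro t
          by_cases h1 : (t : ℕ) + 1 < a.1
          · rw [hfval1 t h1]
          · by_cases h2 : (t : ℕ) + 1 < d
            · rw [hfval2 t h1 h2]
              have := idn_ge I' _ h2
              omega
            · rw [hfval3 t h2]; have := t.isLt; omega
        have hmono : StrictMono f := by
          intro u v huv
          rw [Fin.lt_def] at huv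
          by_cases h1 : (v : ℕ) + 1 < a.1
          · rw [hfval1 u (by omega), hfval1 v h1]; omega
          · by_cases h2 : (v : ℕ) + 1 < d
            · rw [hfval2 v h1 h2]
              have hv2 := idn_ge I' _ h2
              by_cases h3 : (u : ℕ) + 1 < a.1
              · rw [hfval1 u h3]; omega
              · have h4 : (u : ℕ) + 1 < d := by have := v.isLt; omega
                rw [hfval2 u h3 h4]
                exact I'.2.1 (by rw [Fin.lt_def]; show (u : ℕ) + 1 < (v : ℕ) + 1; omega)
            · rw [hfval3 v h2]
              by_cases h3 : (u : ℕ) + 1 < a.1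
              · rw [hfval1 u h3]; omega
              · have h4 : (u : ℕ) + 1 < d := by have := v.isLt; omega
                rw [hfval2 u h3 h4]
                have h5 : I'.val ⟨(u : ℕ) + 1, h4⟩ ≤ I'.val li :=
                  I'.2.1.monotone (by rw [Fin.le_def]; show (u : ℕ) + 1 ≤ (li : ℕ); omega)
                omega
        have hbound : ∀ t : Fin d, 1 ≤ f t ∧ f t ≤ n := by
          intro t
          refine ⟨by have := hfge t; omega, ?_⟩
          by_cases h1 : (t : ℕ) + 1 < a.1
          · rw [hfval1 t h1]; omega
          · by_cases h2 : (t : ℕ) + 1 < d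
            · rw [hfval2 t h1 h2]; exact (I'.2.2 _).2
            · rw [hfval3 t h2]; omega
        set I : Idn d n := ⟨f, hmono, hbound⟩ with hII
        have hIval : ∀ t : Fin d, I.val t = f t := fun t => rfl
        have hIlast : I.val li = a.2 + 1 := by
          rw [hIval, hfval3 li (by rw [hlid]; omega)]
        have hne : ∃ t : Fin d, I.val t ≠ (t : ℕ) + 1 :=
          ⟨li, by rw [hIlast, hlid]; omega⟩
        have hfbig : ∀ t : Fin d, ¬ ((t : ℕ) + 1 < a.1) → (t : ℕ) + 2 ≤ f t := by
          intro t ht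
          by_cases h2 : (t : ℕ) + 1 < d
          · rw [hfval2 t ht h2]
            have := idn_ge I' _ h2
            omega
          · rw [hfval3 t h2]
            have := t.isLt
            omega
        have had : a.1 - 1 < d := by omega
        have hsfunI : sfun I = a.1 - 1 := by
          apply hsfun_eq I hne (a.1 - 1) had
          · intro t ht
            rw [hIval, hfval1 t (by omega)]
          · have h6 : a.1 - 1 + 2 ≤ f ⟨a.1 - 1, had⟩ :=
              hfbig ⟨a.1 - 1, had⟩ (by show ¬ (a.1 - 1 + 1 < a.1); omega)
            rw [hIval]
            omega
        have hpI : p I = I' := by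
          apply Subtype.ext
          funext t
          by_cases h1 : (t : ℕ) ≤ sfun I
          · rw [(hp I hne).2.2.1 t h1, hI'low t (by omega)]
          · have e1 := (hp I hne).2.2.2 t (by omega)
            rw [e1, hIval]
            have h2 : ¬ ((t : ℕ) - 1 + 1 < a.1) := by omega
            have h3 : ((⟨(t : ℕ) - 1, lt_of_le_of_lt (Nat.sub_le _ _) t.isLt⟩ : Fin d) : ℕ) + 1 < d := by
              show (t : ℕ) - 1 + 1 < d
              have := t.isLt; omega
            rw [hfval2 _ h2 h3]
            exact congrArg I'.val (Fin.ext (show (t : ℕ) - 1 + 1 = (t : ℕ) by omega))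
        refine ⟨I, ?_⟩
        rw [hβ I hne, hpI, hI', hsfunI, hIlast]
        have h1 : a.1 - 1 + 1 = a.1 := by omega
        have h2 : a.2 + 1 - 1 = a.2 := rfl
        rw [h1, h2]
        rw [Set.insert_diff_singleton]
        exact Set.insert_eq_of_mem haS
  -- now assemble the bijection
  refine ⟨?_, ?_, ?_⟩
  · -- MapsTo
    intro I _
    have hstr := struct (I.val li) I le_rfl
    refine ⟨⟨?_, ?_, ?_⟩, ?_⟩
    · intro q hq
      apply Set.indicator_of_notMem
      intro hmem
      exact hq (hstr.1 q hmem).1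
    · intro q
      apply Set.indicator_nonneg
      intro q' _
      norm_num
    · intro s path hpath
      have hcard : ∑ r ∈ Finset.range s, Set.indicator (βs I) (fun _ => (1 : ℝ)) (path r)
          = (((Finset.range s).filter (fun r => path r ∈ βs I)).card : ℝ) := by
        simp only [Set.indicator_apply]
        rw [Finset.sum_boole]
      rw [hcard]
      have hle : ((Finset.range s).filter (fun r => path r ∈ βs I)).card ≤ 1 := by
        apply Finset.card_le_one.2
        intro r1 h1 r2 h2
        simp only [Finset.mem_filter, Finset.mem_range] at h1 h2
        by_contra hne12
        have key : ∀ u v, u < v → v < s → path u ∈ βs I → path v ∈ βs I → False := by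
          intro u v huv hv hu' hv'
          have hm := dyck_mono hpath v hv u (le_of_lt huv)
          have hne' : path u ≠ path v := by
            intro he
            rw [he] at hm
            omega
          rcases hstr.2.2 (path u) hu' (path v) hv' hne' with h | h <;> omega
        rcases lt_trichotomy r1 r2 with h | h | h
        · exact key r1 r2 h h2.1 h1.2 h2.2
        · exact hne12 h
        · exact key r2 r1 h h1.1 h2.2 h1.2
      exact_mod_cast hle
    · intro q
      refine ⟨if q ∈ βs I then 1 else 0, ?_⟩
      by_cases h : q ∈ βs I <;> simp [h]
  · -- InjOn
    intro I _ J _ h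
    apply βinj (I.val li) I J le_rfl
    ext q
    have hq := congrFun h q
    simp only at hq
    constructor
    · intro hmem
      by_contra h'
      rw [Set.indicator_of_mem hmem, Set.indicator_of_notMem h'] at hq
      norm_num at hq
    · intro hmem
      by_contra h'
      rw [Set.indicator_of_notMem h', Set.indicator_of_mem hmem] at hq
      norm_num at hq
  · -- SurjOn
    intro x hx
    obtain ⟨⟨hx0, hxnn, hxD⟩, hxint⟩ := hx
    set S : Set (ℕ × ℕ) := {q : ℕ × ℕ | x q ≠ 0} with hSdef
    have hsub : S ⊆ Rset d n := by
      intro q hq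
      by_contra h
      exact hq (hx0 q h)
    have hone : ∀ q ∈ S, x q = 1 := by
      intro q hq
      have hqR := hsub hq
      obtain ⟨hdyck, hpos, _⟩ := dpath_spec (n := n) hd q q hqR hqR le_rfl le_rfl
      have hle : x q ≤ 1 := by
        have hlen : q.2 - d < (q.2 - d) + (q.1 - q.1) + (q.2 - q.2) + (d - q.1) + 1 := by omega
        have h1 : x (dpath d q q (q.2 - d)) ≤
            ∑ r ∈ Finset.range ((q.2 - d) + (q.1 - q.1) + (q.2 - q.2) + (d - q.1) + 1),
              x (dpath d q q r) :=
          Finset.single_le_sum (fun i _ => hxnn _) (Finset.mem_range.2 hlen)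
        rw [hpos] at h1
        exact le_trans h1 (hxD _ _ hdyck)
      obtain ⟨z, hz⟩ := hxint q
      have h0 : 0 ≤ x q := hxnn q
      have hzne : x q ≠ 0 := hq
      rw [hz] at hle h0 hzne ⊢
      have hz1 : z = 1 := by
        have l1 : (0 : ℤ) ≤ z := by exact_mod_cast h0
        have l2 : z ≤ 1 := by exact_mod_cast hle
        have l3 : z ≠ 0 := by exact_mod_cast hzne
        omega
      rw [hz1]; norm_num
    have hxind : x = Set.indicator S (fun _ => (1 : ℝ)) := by
      funext q
      by_cases h : q ∈ S
      · rw [Set.indicator_of_mem h]; exact hone q h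
      · rw [Set.indicator_of_notMem h]
        exact not_not.1 h
    have hsac : SAC S := by
      have hcomp : ∀ u v : ℕ × ℕ, u ∈ S → v ∈ S → u.1 ≤ v.1 → u.2 ≤ v.2 → u = v := by
        intro u v hu hv h1 h2
        by_contra hne
        obtain ⟨hdyck, hpu, hpv⟩ := dpath_spec (n := n) hd u v (hsub hu) (hsub hv) h1 h2
        have hr12 : u.2 - d < (u.2 - d) + (v.1 - u.1) + (v.2 - u.2) := by
          have : u.1 < v.1 ∨ u.2 < v.2 := by
            by_contra hcc
            push_neg at hcc
            exact hne (Prod.ext (by omega) (by omega))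
          have hdu := (hsub hu).2.2.1
          omega
        have hsubset : ({u.2 - d, (u.2 - d) + (v.1 - u.1) + (v.2 - u.2)} : Finset ℕ) ⊆
            Finset.range ((u.2 - d) + (v.1 - u.1) + (v.2 - u.2) + (d - v.1) + 1) := by
          intro r hr
          simp only [Finset.mem_insert, Finset.mem_singleton] at hr
          rw [Finset.mem_range]
          rcases hr with h | h <;> omega
        have hpair : ∑ r ∈ ({u.2 - d, (u.2 - d) + (v.1 - u.1) + (v.2 - u.2)} : Finset ℕ),
              x (dpath d u v r)
            = x (dpath d u v (u.2 - d)) +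
              x (dpath d u v ((u.2 - d) + (v.1 - u.1) + (v.2 - u.2))) :=
          Finset.sum_pair (by omega)
        have hsum : x (dpath d u v (u.2 - d)) +
            x (dpath d u v ((u.2 - d) + (v.1 - u.1) + (v.2 - u.2))) ≤
            ∑ r ∈ Finset.range ((u.2 - d) + (v.1 - u.1) + (v.2 - u.2) + (d - v.1) + 1),
              x (dpath d u v r) :=
          le_trans (le_of_eq hpair.symm)
            (Finset.sum_le_sum_of_subset_of_nonneg hsubset (fun i _ _ => hxnn _))
        rw [hpu, hpv, hone u hu, hone v hv] at hsum
        have := hxD _ _ hdyck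
        linarith
      intro a ha b hb hab
      rcases Nat.lt_trichotomy a.1 b.1 with h | h | h
      · left
        refine ⟨h, ?_⟩
        by_contra h'
        push_neg at h'
        exact hab (hcomp a b ha hb (le_of_lt h) h')
      · rcases Nat.lt_trichotomy a.2 b.2 with h' | h' | h'
        · exact absurd (hcomp a b ha hb (le_of_eq h) (le_of_lt h')) hab
        · exact absurd (Prod.ext h h') hab
        · exact absurd (hcomp b a hb ha (le_of_eq h.symm) (le_of_lt h')) (Ne.symm hab)
      · right
        refine ⟨h, ?_⟩
        by_contra h'
        push_neg at h'
        exact hab ((hcomp b a hb ha (le_of_lt h) h').symm)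
    have hfinite : S.Finite := by
      have hsub2 : Rset d n ⊆ Set.Icc (0, 0) (d, n) := by
        intro q hq
        rw [Set.mem_Icc]
        exact ⟨⟨Nat.zero_le _, Nat.zero_le _⟩, ⟨hq.2.1, by have := hq.2.2.2; omega⟩⟩
      exact (Set.finite_Icc _ _).subset (hsub.trans hsub2)
    obtain ⟨I, hI⟩ := βsurj hfinite.toFinset.card S hfinite le_rfl hsub hsac
    exact ⟨I, Set.mem_univ I, by simp only; rw [hI, ← hxind]⟩
end

section
/- Let 1 ≤ d ≤ n, L = I(d,n), N = d(n−d), and fix a maximal chain C in L with associated order-preserving enumeration m_0 = O, m_1, …, m_N of J(L), defining the valuation ν_{C,Spec} and the sets Γ_j ⊂ ℤ^{N+1} as described. Then the Newton–Okounkov body NO_C := closure of the convex hull of ∪_{j ≥ 1} {v/j : v ∈ Γ_j} ⊂ ℝ^{N+1} equals {1} × P, where P ⊆ ℝ^N is the image of the order polytope of the poset J(L) \ {O} under the coordinate identification i ↦ m_i (i = 1, …, N); since the poset J(L) \ {O} is isomorphic to the grid poset R_{d,n}, P is, up to a coordinate permutation, the order polytope of R_{d,n}, i.e. NO_C is unimodularly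 equivalent to the Gelfand–Tsetlin polytope of Gr_{d,n}. -/
/-- The strict componentwise order on `I(d,n)`. -/
def idnLT {d n : ℕ} (a b : Idn d n) : Prop := idnLE a b ∧ a ≠ b

/-- An order-preserving enumeration `m 0 = [1,…,d], m 1, …, m N` of the join-irreducible
elements of `I(d,n)`. -/
def IsEnumI (d n N : ℕ) (m : ℕ → Idn d n) : Prop :=
  (∀ r : Fin d, (m 0).val r = (r : ℕ) + 1) ∧
  (∀ i, i ≤ N → ∀ j, j ≤ N → m i = m j → i = j) ∧
  (∀ i, i ≤ N → idnJI (m i)) ∧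
  (∀ x : Idn d n, idnJI x → ∃ i ≤ N, m i = x) ∧
  (∀ i, i ≤ N → ∀ j, j ≤ N → idnLT (m i) (m j) → i < j)

open MvPolynomial in
-- The Hibi ring generator `u ℓ = ∏_{i ≤ N, m i ∈ Spec ℓ} y i ∈ ℂ[y_0, y_1, …]`.
open Classical in
noncomputable def hibiU (d n N : ℕ) (m : ℕ → Idn d n) (ℓ : Idn d n) :
    MvPolynomial ℕ ℂ :=
  ∏ i ∈ Finset.range (N + 1), if idnLE (m i) ℓ then X i else 1

/-- The reverse lexicographic order relation used on the exponents in the variables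
`y_1, y_2, …` . -/
def RLE (v w : ℕ → ℤ) : Prop :=
  v = w ∨ ∃ i : ℕ, v i < w i ∧ ∀ j : ℕ, i < j → v j = w j

/-- The exponent vector of a monomial of `ℂ[y_0, y_1, …]`, with the `y_0`-coordinate
suppressed. -/
def res (s : ℕ →₀ ℕ) : ℕ → ℤ := fun i => if i = 0 then 0 else (s i : ℤ)

/-- The level-`j` part `Γ_j ⊂ ℤ^{N+1}` of the valuation monoid: the values
`j·e_0 + ν_{C,Spec}(h / y_0^j)` over the nonzero degree-`j` homogeneous elements `h` of
the Hibi ring, where `ν_{C,Spec}` takes the reverse-lexicographic minimum of the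
exponent vectors in `y_1, …, y_N` over the support. -/
def Gam (d n N : ℕ) (m : ℕ → Idn d n) (j : ℕ) : Set (ℕ → ℤ) :=
  {w : ℕ → ℤ | ∃ h : MvPolynomial ℕ ℂ,
    h ∈ Algebra.adjoin ℂ (Set.range (hibiU d n N m)) ∧ h ≠ 0 ∧
    (∀ s ∈ h.support, s 0 = j) ∧
    ∃ s₀ ∈ h.support, (∀ s' ∈ h.support, RLE (res s₀) (res s')) ∧
      w 0 = (j : ℤ) ∧ ∀ i : ℕ, 1 ≤ i → w i = (s₀ i : ℤ)}

/-!
The exponent of every generator `u_ℓ` of the Hibi ring is order-reversing along the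
enumeration `m` and vanishes beyond `N`; such exponents form an additive monoid, so every
monomial in the support of an element of the Hibi ring has this shape, and the normalized
values lie in `{1} × P`, which is closed and convex. Conversely, a point of `{1} × P` is a
convex combination of its threshold indicators `1_{x ≥ t}`; each of these is the
0/1-vector of a down-set of `J(L)`, which is `Spec ℓ` for the join `ℓ` of that down-set
(join-irreducibles of the distributive lattice `I(d,n)` are join-prime), hence the value of
the single generator `u_ℓ`.

The nontrivial join-irreducibles of `I(d,n)` are the tuples `[1, …, τ, τ+1+c, …, d+c]` with
`τ < d`, `0 < c ≤ n - d`, and `x ≤ x'` iff `τ' ≤ τ` and `c ≤ c'`; `(d - τ, d + c - 1)`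
identifies them with `R_{d,n}`.
-/

section Thresholds

open Finset

noncomputable def rescaleAbove (t r : ℝ) : ℝ := if 0 < r then (r - t) / (1 - t) else 0

variable {t r : ℝ}

theorem rescaleAbove_mem_Icc (ht1 : t < 1) (hr : 0 ≤ r ∧ r ≤ 1) (htr : 0 < r → t ≤ r) :
    0 ≤ rescaleAbove t r ∧ rescaleAbove t r ≤ 1 := by
  have h1t : 0 < 1 - t := by linarith
  unfold rescaleAbove
  split_ifs with h
  · have := htr h
    exact ⟨div_nonneg (by linarith) h1t.le, (div_le_one h1t).2 (by linarith)⟩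
  · simp

theorem le_rescaleAbove_iff {s : ℝ} (ht0 : 0 ≤ t) (ht1 : t < 1) (hs : 0 < s) :
    s ≤ rescaleAbove t r ↔ t + s * (1 - t) ≤ r := by
  have h1t : 0 < 1 - t := by linarith
  unfold rescaleAbove
  split_ifs with h
  · rw [le_div_iff₀ h1t]
    constructor <;> intro <;> linarith
  · constructor <;> intro <;> nlinarith [mul_pos hs h1t]

theorem eq_threshold_add_rescaleAbove (ht0 : 0 < t) (ht1 : t < 1) (hr : 0 ≤ r)
    (htr : 0 < r → t ≤ r) :
    r = t * (if t ≤ r then 1 else 0) + (1 - t) * rescaleAbove t r := by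
  unfold rescaleAbove
  by_cases h : 0 < r
  · rw [if_pos (htr h), if_pos h]
    field_simp [(by linarith : (1 : ℝ) - t ≠ 0)]
    ring
  · rw [if_neg (fun h' => h (ht0.trans_le h')), if_neg h]
    linarith

theorem card_filter_pos_image_rescaleAbove_lt {V : Finset ℝ} (ht : t ∈ V.filter (0 < ·)) :
    #((V.image (rescaleAbove t)).filter (0 < ·)) < #(V.filter (0 < ·)) := by
  have hsub : (V.image (rescaleAbove t)).filter (0 < ·) ⊆
      ((V.filter (0 < ·)).erase t).image (rescaleAbove t) := by
    intro b hb
    obtain ⟨hbV, hb0⟩ := mem_filter.1 hb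
    obtain ⟨a, ha, rfl⟩ := mem_image.1 hbV
    have ha0 : 0 < a := by
      by_contra h
      simp [rescaleAbove, h] at hb0
    refine mem_image_of_mem _ (mem_erase.2 ⟨?_, mem_filter.2 ⟨ha, ha0⟩⟩)
    rintro rfl
    simp [rescaleAbove, ha0] at hb0
  calc _ ≤ #(((V.filter (0 < ·)).erase t).image (rescaleAbove t)) := card_le_card hsub
    _ ≤ #((V.filter (0 < ·)).erase t) := card_image_le
    _ < #(V.filter (0 < ·)) := card_erase_lt_of_mem ht

theorem mem_convexHull_of_thresholds {ι : Type*} {S : Set (ι → ℝ)} (V : Finset ℝ)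
    (hV : ∀ r ∈ V, 0 ≤ r ∧ r ≤ 1) {x : ι → ℝ} (hxV : ∀ i, x i ∈ V)
    (hS : ∀ t : ℝ, 0 < t → t ≤ 1 → (fun i => if t ≤ x i then (1 : ℝ) else 0) ∈ S) :
    x ∈ convexHull ℝ S := by
  induction hk : #(V.filter (0 < ·)) using Nat.strong_induction_on generalizing V x with
  | _ k ih =>
  by_cases h01 : ∀ r ∈ V, r = 0 ∨ r = 1
  · convert subset_convexHull ℝ S (hS 1 one_pos le_rfl) using 1
    funext i
    rcases h01 _ (hxV i) with h | h <;> simp [h]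
  push Not at h01
  obtain ⟨r, hrV, hr0, hr1⟩ := h01
  have hr : 0 < r := (hV r hrV).1.lt_of_ne' hr0
  have hne : (V.filter (0 < ·)).Nonempty := ⟨r, mem_filter.2 ⟨hrV, hr⟩⟩
  -- `x = t • 1_{x ≥ t} + (1 - t) • y` for the least positive value `t`, where `y` has one
  -- positive value fewer
  set t := (V.filter (0 < ·)).min' hne
  have ht0 : 0 < t := (mem_filter.1 (min'_mem _ hne)).2
  have ht_le : ∀ r ∈ V, 0 < r → t ≤ r := fun r hr hr0 => min'_le _ _ (mem_filter.2 ⟨hr, hr0⟩)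
  have ht1 : t < 1 := (ht_le r hrV hr).trans_lt ((hV r hrV).2.lt_of_ne hr1)
  have hsplit : x = t • (fun i => if t ≤ x i then (1 : ℝ) else 0) +
      (1 - t) • (rescaleAbove t ∘ x) := funext fun i =>
    eq_threshold_add_rescaleAbove ht0 ht1 (hV _ (hxV i)).1 (ht_le _ (hxV i))
  have hrest : rescaleAbove t ∘ x ∈ convexHull ℝ S := by
    refine ih _ (hk ▸ card_filter_pos_image_rescaleAbove_lt (min'_mem _ hne)) (V.image _)
      ?_ (fun i => mem_image_of_mem _ (hxV i)) (fun s hs0 hs1 => ?_) rfl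
    · simpa using fun r hr => rescaleAbove_mem_Icc ht1 (hV r hr) (ht_le r hr)
    · convert hS (t + s * (1 - t)) (by nlinarith) (by nlinarith) using 2 with i
      exact if_congr (le_rescaleAbove_iff ht0.le ht1 hs0) rfl rfl
  rw [hsplit]
  exact convex_convexHull ℝ S (subset_convexHull ℝ S (hS t ht0 ht1.le)) hrest ht0.le
    (by linarith) (by ring)

end Thresholds

theorem MvPolynomial.support_subset_of_mem_adjoin {σ R : Type*} [CommSemiring R]
    (M : AddSubmonoid (σ →₀ ℕ)) {S : Set (MvPolynomial σ R)}
    (hS : ∀ p ∈ S, ↑p.support ⊆ (M : Set (σ →₀ ℕ))) {p : MvPolynomial σ R}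
    (hp : p ∈ Algebra.adjoin R S) : ↑p.support ⊆ (M : Set (σ →₀ ℕ)) := by
  classical
  induction hp using Algebra.adjoin_induction with
  | mem p hp => exact hS p hp
  | algebraMap r =>
    intro s hs
    rw [algebraMap_eq, C_apply, Finset.mem_coe] at hs
    rw [Finset.mem_singleton.1 (support_monomial_subset hs)]
    exact M.zero_mem
  | add p q _ _ hp hq =>
    exact fun s hs => (Finset.mem_union.1 (support_add hs)).elim (hp ·) (hq ·)
  | mul p q _ _ hp hq =>
    intro s hs
    obtain ⟨a, ha, b, hb, rfl⟩ := Finset.mem_add.1 (support_mul p q hs)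
    exact M.add_mem (hp ha) (hq hb)

section Lattice

variable {d n : ℕ}

instance : DistribLattice (Idn d n) :=
  Subtype.distribLattice (P := fun v : Fin d → ℕ => StrictMono v ∧ ∀ t, 1 ≤ v t ∧ v t ≤ n)
    (fun _ _ hs ht => ⟨fun _ _ hij => max_lt_max (hs.1 hij) (ht.1 hij),
      fun t => ⟨le_max_of_le_left (hs.2 t).1, max_le (hs.2 t).2 (ht.2 t).2⟩⟩)
    (fun _ _ hs ht => ⟨fun _ _ hij => min_lt_min (hs.1 hij) (ht.1 hij),
      fun t => ⟨le_min (hs.2 t).1 (ht.2 t).1, (min_le_left _ _).trans (hs.2 t).2⟩⟩)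

theorem idnLE_iff_le {a b : Idn d n} : idnLE a b ↔ a ≤ b := Iff.rfl

theorem idnJoin_eq_sup (a b : Idn d n) : idnJoin a b = a ⊔ b := rfl

theorem StrictMono.apply_add_le_apply {v : Fin d → ℕ} (hv : StrictMono v) {i j : Fin d}
    (hij : i ≤ j) : v i + j ≤ v j + i := by
  obtain ⟨k, hk⟩ := Nat.exists_eq_add_of_le (Fin.le_def.1 hij)
  induction k generalizing j with
  | zero => simp [Fin.ext hk.symm]
  | succ k ih =>
    have h1 : v i + (i + k) ≤ v ⟨i + k, by omega⟩ + i :=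
      ih (j := ⟨i + k, by omega⟩) (Fin.le_def.2 (by simp)) rfl
    have h2 : v ⟨i + k, by omega⟩ < v j := hv (Fin.lt_def.2 (by simp; omega))
    omega

theorem Idn.succ_le_s19 (a : Idn d n) (r : Fin d) : (r : ℕ) + 1 ≤ a.val r := by
  have h0 := a.prop.1.apply_add_le_apply (i := ⟨0, r.pos⟩) (j := r) (Fin.le_def.2 (Nat.zero_le _))
  have := (a.prop.2 ⟨0, r.pos⟩).1
  simp only at h0
  omega

theorem Idn.le_of_val_eq_succ {a : Idn d n} (ha : ∀ r : Fin d, a.val r = r + 1) (b : Idn d n) :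
    a ≤ b :=
  fun r => (ha r).trans_le (b.succ_le_s19 r)

theorem idnJI.le_or_le {p a b : Idn d n} (hp : idnJI p) (h : p ≤ a ⊔ b) : p ≤ a ∨ p ≤ b := by
  have hsplit : p = p ⊓ a ⊔ p ⊓ b := by rw [← inf_sup_left, inf_eq_left.2 h]
  exact (hp _ _ hsplit).imp (fun he => inf_eq_left.1 he.symm) (fun he => inf_eq_left.1 he.symm)

theorem idnJI.exists_le_of_le_sup' {ι : Type*} {p : Idn d n} (hp : idnJI p) {s : Finset ι}
    (hs : s.Nonempty) {f : ι → Idn d n} (h : p ≤ s.sup' hs f) : ∃ i ∈ s, p ≤ f i :=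
  Finset.sup'_induction hs f (p := fun a => p ≤ a → ∃ i ∈ s, p ≤ f i)
    (fun _ h₁ _ h₂ hle => (hp.le_or_le hle).elim h₁ h₂) (fun i hi hle => ⟨i, hi, hle⟩) h

end Lattice

section Rectangles

open Finset

variable {d n : ℕ}

/-- `x = [1, …, τ, τ+1+c, …, d+c]`: the Young diagram of `x` is a `(d - τ) × c` rectangle. -/
def IsRectangle (x : Idn d n) (τ c : ℕ) : Prop :=
  ∀ t : Fin d, x.val t = if (t : ℕ) < τ then (t : ℕ) + 1 else (t : ℕ) + 1 + c

theorem exists_isRectangle (τ : ℕ) {c : ℕ} (hc : d + c ≤ n) : ∃ x : Idn d n, IsRectangle x τ c :=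
  ⟨⟨fun t => if (t : ℕ) < τ then t + 1 else t + 1 + c,
    fun i j hij => by have : (i : ℕ) < j := hij; dsimp only; split_ifs <;> omega,
    fun t => by have := t.isLt; dsimp only; split_ifs <;> omega⟩, fun _ => rfl⟩

theorem IsRectangle.le_iff {x y : Idn d n} {τ c τ' c' : ℕ} (hx : IsRectangle x τ c)
    (hy : IsRectangle y τ' c') (hτ : τ < d) (hc : 0 < c) : x ≤ y ↔ τ' ≤ τ ∧ c ≤ c' := by
  constructor
  · intro h
    have hle : x.val ⟨τ, hτ⟩ ≤ y.val ⟨τ, hτ⟩ := h _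
    rw [hx, hy] at hle
    dsimp only at hle
    split_ifs at hle <;> omega
  · rintro ⟨hτ', hc'⟩ t
    change x.val t ≤ y.val t
    rw [hx t, hy t]
    split_ifs <;> omega

theorem IsRectangle.eq_of_le {x a : Idn d n} {τ c : ℕ} (hx : IsRectangle x τ c) (hτ : τ < d)
    (ha : a ≤ x) (hτa : a.val ⟨τ, hτ⟩ = x.val ⟨τ, hτ⟩) : a = x := by
  refine Subtype.ext (funext fun t => ?_)
  have h1 : a.val t ≤ x.val t := ha t
  have h2 := a.succ_le_s19 t
  rw [hx] at h1 hτa ⊢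
  dsimp only at hτa
  rcases lt_or_ge (t : ℕ) τ with ht | ht
  · rw [if_pos ht] at h1 ⊢
    omega
  · have h3 := a.prop.1.apply_add_le_apply (i := ⟨τ, hτ⟩) (j := t) ht
    rw [if_neg (lt_irrefl τ)] at hτa
    rw [if_neg (not_lt.2 ht)] at h1 ⊢
    dsimp only at h3
    omega

theorem idnJI_of_isRectangle {x : Idn d n} {τ c : ℕ} (hx : IsRectangle x τ c) (hτ : τ < d) :
    idnJI x := by
  intro a b hab
  rw [idnJoin_eq_sup] at hab
  have hmax : x.val ⟨τ, hτ⟩ = max (a.val ⟨τ, hτ⟩) (b.val ⟨τ, hτ⟩) := by rw [hab]; rfl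
  rcases max_choice (a.val ⟨τ, hτ⟩) (b.val ⟨τ, hτ⟩) with h | h
  · exact Or.inl (hx.eq_of_le hτ (le_sup_left.trans_eq hab.symm) (by rw [hmax, h])).symm
  · exact Or.inr (hx.eq_of_le hτ (le_sup_right.trans_eq hab.symm) (by rw [hmax, h])).symm

end Rectangles

section Classification

open Finset

variable {d n : ℕ}

/-- If the gap `x s - s - 1 = g` were strictly between `0` and the gap at `t`, then `x` would
be the join of `min x (· + 1 + g)` and the tuple obtained from `x` by lowering every entry with
gap at most `g` to the minimum. -/
theorem idnJI.val_eq_or {x : Idn d n} (hx : idnJI x) {s t : Fin d} (hst : s ≤ t) :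
    x.val s = s + 1 ∨ x.val s + t = x.val t + s := by
  by_contra! h
  set g := x.val s - (s + 1)
  have hmono := x.prop.1.apply_add_le_apply hst
  have hs := x.succ_le_s19 s
  let a : Idn d n := ⟨fun u => min (x.val u) ((u : ℕ) + 1 + g),
    fun i j hij => min_lt_min (x.prop.1 hij) (by have : (i : ℕ) < j := hij; omega),
    fun u => ⟨le_min (x.prop.2 u).1 (by omega), (min_le_left _ _).trans (x.prop.2 u).2⟩⟩
  let b : Idn d n := ⟨fun u => if x.val u ≤ (u : ℕ) + 1 + g then (u : ℕ) + 1 else x.val u,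
    fun i j hij => by
      have : (i : ℕ) < j := hij
      have := x.prop.1 hij
      have := x.prop.1.apply_add_le_apply hij.le
      have := x.succ_le_s19 j
      dsimp only
      split_ifs <;> omega,
    fun u => by
      have := x.succ_le_s19 u
      have := (x.prop.2 u).2
      dsimp only
      split_ifs <;> omega⟩
  have hab : x = idnJoin a b := by
    refine Subtype.ext (funext fun u => ?_)
    have := x.succ_le_s19 u
    change x.val u = max (min (x.val u) ((u : ℕ) + 1 + g))
      (if x.val u ≤ (u : ℕ) + 1 + g then (u : ℕ) + 1 else x.val u)
    split_ifs <;> omega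
  rcases hx a b hab with he | he
  · have : x.val t = min (x.val t) ((t : ℕ) + 1 + g) := congrFun (congrArg Subtype.val he) t
    omega
  · have : x.val s = if x.val s ≤ (s : ℕ) + 1 + g then (s : ℕ) + 1 else x.val s :=
      congrFun (congrArg Subtype.val he) s
    rw [if_pos (by omega)] at this
    omega

theorem exists_isRectangle_of_idnJI {x : Idn d n} (hx : idnJI x)
    (hr : ∃ r : Fin d, x.val r ≠ r + 1) :
    ∃ τ c : ℕ, τ < d ∧ 0 < c ∧ d + c ≤ n ∧ IsRectangle x τ c := by
  obtain ⟨r, hr⟩ := hr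
  have hne : (univ.filter fun t : Fin d => x.val t ≠ t + 1).Nonempty := ⟨r, by simpa using hr⟩
  set τ := (univ.filter fun t : Fin d => x.val t ≠ t + 1).min' hne
  have hτ : x.val τ ≠ τ + 1 := (mem_filter.1 (min'_mem _ hne)).2
  obtain ⟨last, hlast⟩ : ∃ last : Fin d, (last : ℕ) = d - 1 := ⟨⟨d - 1, by omega⟩, rfl⟩
  have hle_last : ∀ t : Fin d, t ≤ last := fun t => Fin.le_def.2 (by omega)
  have hτlast := (hx.val_eq_or (hle_last τ)).resolve_left hτ
  have hτx := x.succ_le_s19 τ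
  refine ⟨τ, x.val last - d, τ.isLt, by omega,
    by have := (x.prop.2 last).2; omega, fun t => ?_⟩
  split_ifs with ht
  · by_contra h
    exact absurd (min'_le _ t (by simpa using h)) (not_le.2 ht)
  · have h1 := x.prop.1.apply_add_le_apply (Fin.le_def.2 (not_lt.1 ht))
    have h2 := x.prop.1.apply_add_le_apply (hle_last t)
    omega

end Classification

theorem exists_grid_embedding {d n : ℕ} :
    ∃ e : {x : Idn d n // idnJI x ∧ ∃ r : Fin d, x.val r ≠ (r : ℕ) + 1} → ℕ × ℕ,
      Function.Injective e ∧ Set.range e = Rset d n ∧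
      ∀ a b : {x : Idn d n // idnJI x ∧ ∃ r : Fin d, x.val r ≠ (r : ℕ) + 1},
        (idnLE a.val b.val ↔ e a ≤ e b) := by
  choose τ c hτ hc hcn hrect using
    fun x : {x : Idn d n // idnJI x ∧ ∃ r : Fin d, x.val r ≠ r + 1} =>
      exists_isRectangle_of_idnJI x.2.1 x.2.2
  have hle : ∀ a b, idnLE a.val b.val ↔ (d - τ a, d + c a - 1) ≤ (d - τ b, d + c b - 1) := by
    intro a b
    rw [idnLE_iff_le, (hrect a).le_iff (hrect b) (hτ a) (hc a), Prod.mk_le_mk]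
    have := hτ b
    omega
  refine ⟨fun x => (d - τ x, d + c x - 1), fun a b hab => Subtype.ext ?_, ?_, hle⟩
  · exact le_antisymm ((hle a b).2 hab.le) ((hle b a).2 hab.ge)
  ext p
  constructor
  · rintro ⟨x, rfl⟩
    have := hτ x; have := hc x; have := hcn x
    refine ⟨?_, ?_, ?_, ?_⟩ <;> dsimp only <;> omega
  · rintro ⟨hp1, hpd, hdp, hpn⟩
    obtain ⟨x, hx⟩ := exists_isRectangle (d := d) (n := n) (d - p.1) (c := p.2 + 1 - d) (by omega)
    have hxτ : d - p.1 < d := by omega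
    have hxc : 0 < p.2 + 1 - d := by omega
    have hnontriv : x.val ⟨d - p.1, hxτ⟩ ≠ d - p.1 + 1 := by
      rw [hx]
      simp only [lt_irrefl, if_false]
      omega
    let y : {x : Idn d n // idnJI x ∧ ∃ r : Fin d, x.val r ≠ r + 1} :=
      ⟨x, idnJI_of_isRectangle hx hxτ, _, hnontriv⟩
    have h1 := ((hrect y).le_iff hx (hτ y) (hc y)).1 le_rfl
    have h2 := (hx.le_iff (hrect y) hxτ hxc).1 le_rfl
    exact ⟨y, Prod.ext (by dsimp only; omega) (by dsimp only; omega)⟩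

section HibiRing

open MvPolynomial Finset

variable {d n : ℕ} (N : ℕ) (m : ℕ → Idn d n)

open Classical in
noncomputable def specExponent (ℓ : Idn d n) : ℕ →₀ ℕ :=
  ∑ i ∈ (range (N + 1)).filter (fun i => m i ≤ ℓ), Finsupp.single i 1

open Classical in
theorem specExponent_apply (ℓ : Idn d n) (k : ℕ) :
    specExponent N m ℓ k = if k ≤ N ∧ m k ≤ ℓ then 1 else 0 := by
  simp [specExponent, Finsupp.finsetSum_apply, Finsupp.single_apply]

theorem hibiU_eq_monomial (ℓ : Idn d n) : hibiU d n N m ℓ = monomial (specExponent N m ℓ) 1 := by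
  classical
  rw [hibiU, specExponent, monomial_sum_one, prod_filter]
  refine prod_congr rfl fun i _ => ?_
  by_cases h : m i ≤ ℓ <;> simp [h, X, idnLE_iff_le]

def orderReversingExponents : AddSubmonoid (ℕ →₀ ℕ) where
  carrier := {s | (∀ i ≤ N, ∀ j ≤ N, m i ≤ m j → s j ≤ s i) ∧ ∀ i, N < i → s i = 0}
  add_mem' ha hb := ⟨fun i hi j hj h => add_le_add (ha.1 i hi j hj h) (hb.1 i hi j hj h),
    fun i hi => by simp [ha.2 i hi, hb.2 i hi]⟩
  zero_mem' := ⟨by simp, by simp⟩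

theorem specExponent_mem (ℓ : Idn d n) : specExponent N m ℓ ∈ orderReversingExponents N m := by
  refine ⟨fun i hi j hj hij => ?_, fun i hi => ?_⟩
  · simp only [specExponent_apply]
    split_ifs with h1 h2 <;> first | omega | exact absurd ⟨hi, hij.trans h1.2⟩ h2
  · simp [specExponent_apply, Nat.not_le.2 hi]

theorem support_subset_of_mem_hibiRing {h : MvPolynomial ℕ ℂ}
    (hh : h ∈ Algebra.adjoin ℂ (Set.range (hibiU d n N m))) :
    ↑h.support ⊆ (orderReversingExponents N m : Set (ℕ →₀ ℕ)) := by
  refine support_subset_of_mem_adjoin _ ?_ hh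
  rintro _ ⟨ℓ, rfl⟩
  rw [hibiU_eq_monomial]
  intro s hs
  rw [mem_singleton.1 (support_monomial_subset hs)]
  exact specExponent_mem N m ℓ

end HibiRing

section Polytope

variable {d n : ℕ} (N : ℕ) (m : ℕ → Idn d n)

/-- `⋃_{j ≥ 1} Γ_j / j`. -/
def normalizedValues : Set (ℕ → ℝ) :=
  {x | ∃ j : ℕ, 1 ≤ j ∧ ∃ w ∈ Gam d n N m j, x = (j : ℝ)⁻¹ • fun i : ℕ => (w i : ℝ)}

/-- `{1} × P`, the coordinate `i ∈ [1, N]` standing for the join-irreducible `m i`. -/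
def orderPolytopeSlice : Set (ℕ → ℝ) :=
  {x | x 0 = 1 ∧ (∀ i, 1 ≤ i → i ≤ N → 0 ≤ x i ∧ x i ≤ 1) ∧
    (∀ i j, 1 ≤ i → i ≤ N → 1 ≤ j → j ≤ N → m i ≤ m j → x j ≤ x i) ∧ ∀ i, N < i → x i = 0}

theorem isClosed_orderPolytopeSlice : IsClosed (orderPolytopeSlice N m) := by
  simp only [orderPolytopeSlice, Set.ofPred_and, Set.ofPred_forall]
  repeat' (first | apply IsClosed.inter | apply isClosed_iInter; intro)
  all_goals first
    | exact isClosed_eq (continuous_apply _) continuous_const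
    | exact isClosed_le (continuous_apply _) (continuous_apply _)
    | exact isClosed_le (continuous_apply _) continuous_const
    | exact isClosed_le continuous_const (continuous_apply _)

theorem convex_orderPolytopeSlice : Convex ℝ (orderPolytopeSlice N m) := by
  simp only [orderPolytopeSlice, Set.ofPred_and, Set.ofPred_forall]
  repeat' (first | apply Convex.inter | apply convex_iInter; intro)
  all_goals first
    | exact convex_hyperplane (LinearMap.proj _ : (ℕ → ℝ) →ₗ[ℝ] ℝ).isLinear _
    | exact convex_halfSpace_le (LinearMap.proj _ : (ℕ → ℝ) →ₗ[ℝ] ℝ).isLinear _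
    | exact convex_halfSpace_ge (LinearMap.proj _ : (ℕ → ℝ) →ₗ[ℝ] ℝ).isLinear _
    | exact fun x hx y hy a b ha hb _ => show (a • x + b • y) _ ≤ (a • x + b • y) _ from
        add_le_add (smul_le_smul_of_nonneg_left hx ha) (smul_le_smul_of_nonneg_left hy hb)

theorem normalizedValues_subset (hm0 : ∀ r : Fin d, (m 0).val r = r + 1) :
    normalizedValues N m ⊆ orderPolytopeSlice N m := by
  rintro x ⟨j, hj, w, ⟨h, hh, -, hdeg, s, hs, -, hw0, hw⟩, rfl⟩
  have hsM := support_subset_of_mem_hibiRing N m hh hs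
  have hs0 : s 0 = j := hdeg s hs
  have hws : (fun i => (w i : ℝ)) = fun i => (s i : ℝ) := by
    funext i
    rcases Nat.eq_zero_or_pos i with rfl | hi
    · simp [hw0, hs0]
    · simp [hw i hi]
  have hjpos : (0 : ℝ) < j := by exact_mod_cast hj
  rw [hws]
  refine ⟨?_, fun i _ hiN => ⟨?_, ?_⟩, fun i k _ hiN _ hkN hik => ?_, fun i hi => ?_⟩ <;>
    simp only [Pi.smul_apply, smul_eq_mul]
  · rw [hs0]
    field_simp
  · positivity
  · rw [inv_mul_le_one₀ hjpos, ← hs0]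
    exact_mod_cast hsM.1 0 (Nat.zero_le N) i hiN ((m 0).le_of_val_eq_succ hm0 _)
  · gcongr
    exact_mod_cast hsM.1 i hiN k hkN hik
  · simp [hsM.2 i hi]

end Polytope

section Vertices

open Finset MvPolynomial

variable {d n : ℕ} (N : ℕ) (m : ℕ → Idn d n)

theorem exists_spec_eq_of_downward_closed (hJI : ∀ k ≤ N, idnJI (m k)) (P : ℕ → Prop)
    (hP0 : P 0) (hP : ∀ i ≤ N, ∀ j ≤ N, m i ≤ m j → P j → P i) :
    ∃ ℓ : Idn d n, ∀ k ≤ N, m k ≤ ℓ ↔ P k := by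
  classical
  have hne : ((range (N + 1)).filter P).Nonempty := ⟨0, by simp [hP0]⟩
  refine ⟨((range (N + 1)).filter P).sup' hne m, fun k hk => ⟨fun h => ?_, fun h => ?_⟩⟩
  · obtain ⟨i, hi, hki⟩ := (hJI k hk).exists_le_of_le_sup' hne h
    obtain ⟨hiN, hPi⟩ := mem_filter.1 hi
    exact hP k hk i (Nat.lt_succ_iff.1 (mem_range.1 hiN)) hki hPi
  · exact le_sup' m (mem_filter.2 ⟨mem_range.2 (Nat.lt_succ_iff.2 hk), h⟩)

theorem specExponent_mem_Gam (hm0 : ∀ r : Fin d, (m 0).val r = r + 1) (ℓ : Idn d n) :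
    (fun i => (specExponent N m ℓ i : ℤ)) ∈ Gam d n N m 1 := by
  classical
  have hsupp : (hibiU d n N m ℓ).support = {specExponent N m ℓ} := by
    rw [hibiU_eq_monomial, support_monomial, if_neg one_ne_zero]
  have h0 : specExponent N m ℓ 0 = 1 := by
    simp [specExponent_apply, (m 0).le_of_val_eq_succ hm0 ℓ]
  refine ⟨_, Algebra.subset_adjoin ⟨ℓ, rfl⟩, ?_, ?_, _, ?_, ?_, by simp [h0], fun _ _ => rfl⟩
  · simp [hibiU_eq_monomial]
  · simpa [hsupp] using h0
  · simp [hsupp]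
  · simp [hsupp, RLE]

theorem threshold_mem_normalizedValues (hm : IsEnumI d n N m) {x : ℕ → ℝ}
    (hx : x ∈ orderPolytopeSlice N m) {t : ℝ} (ht0 : 0 < t) (ht1 : t ≤ 1) :
    (fun i => if t ≤ x i then (1 : ℝ) else 0) ∈ normalizedValues N m := by
  obtain ⟨hx0, -, hxle, hxN⟩ := hx
  have hdown : ∀ i ≤ N, ∀ j ≤ N, m i ≤ m j → t ≤ x j → t ≤ x i := by
    intro i hi j hj hij htj
    rcases Nat.eq_zero_or_pos i with rfl | hi0
    · exact hx0 ▸ ht1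
    rcases Nat.eq_zero_or_pos j with rfl | hj0
    · exact absurd (hm.2.1 i hi 0 (Nat.zero_le N)
        (le_antisymm hij ((m 0).le_of_val_eq_succ hm.1 _))) hi0.ne'
    · exact htj.trans (hxle i j hi0 hi hj0 hj hij)
  obtain ⟨ℓ, hℓ⟩ := exists_spec_eq_of_downward_closed N m hm.2.2.1 (fun k => t ≤ x k)
    (hx0 ▸ ht1) hdown
  refine ⟨1, le_rfl, _, specExponent_mem_Gam N m hm.1 ℓ, funext fun i => ?_⟩
  by_cases hi : i ≤ N
  · simp [specExponent_apply, hi, hℓ i hi]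
  · simp [specExponent_apply, hi, hxN i (not_le.1 hi), not_le.2 ht0]

end Vertices

theorem closure_convexHull_normalizedValues {d n N : ℕ} {m : ℕ → Idn d n}
    (hm : IsEnumI d n N m) :
    closure (convexHull ℝ (normalizedValues N m)) = orderPolytopeSlice N m := by
  refine (closure_minimal (convexHull_min (normalizedValues_subset N m hm.1)
    (convex_orderPolytopeSlice N m)) (isClosed_orderPolytopeSlice N m)).antisymm
    fun x hx => subset_closure ?_
  refine mem_convexHull_of_thresholds (insert 0 ((Finset.range (N + 1)).image x)) ?_ ?_
    fun t ht0 ht1 => threshold_mem_normalizedValues N m hm hx ht0 ht1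
  · simp only [Finset.mem_insert, Finset.mem_image, Finset.mem_range]
    rintro r (rfl | ⟨i, hi, rfl⟩)
    · norm_num
    · rcases Nat.eq_zero_or_pos i with rfl | hi0
      · simp [hx.1]
      · exact hx.2.1 i hi0 (by omega)
  · intro i
    by_cases hi : i ≤ N
    · exact Finset.mem_insert_of_mem (Finset.mem_image_of_mem x (Finset.mem_range.2 (by omega)))
    · rw [hx.2.2.2 i (by omega)]
      exact Finset.mem_insert_self _ _

theorem stmt19_general (d n : ℕ)
    (m : ℕ → Idn d n) (hm : IsEnumI d n (d * (n - d)) m) :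
    closure (convexHull ℝ
      {x : ℕ → ℝ | ∃ j : ℕ, 1 ≤ j ∧ ∃ w ∈ Gam d n (d * (n - d)) m j,
        x = (j : ℝ)⁻¹ • fun i : ℕ => (w i : ℝ)})
      = {x : ℕ → ℝ | x 0 = 1 ∧
          (∀ i : ℕ, 1 ≤ i → i ≤ d * (n - d) → 0 ≤ x i ∧ x i ≤ 1) ∧
          (∀ i j : ℕ, 1 ≤ i → i ≤ d * (n - d) → 1 ≤ j → j ≤ d * (n - d) →
            idnLE (m i) (m j) → x j ≤ x i) ∧
          (∀ i : ℕ, d * (n - d) < i → x i = 0)} ∧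
    ∃ e : {x : Idn d n // idnJI x ∧ ∃ r : Fin d, x.val r ≠ (r : ℕ) + 1} → ℕ × ℕ,
      Function.Injective e ∧ Set.range e = Rset d n ∧
      ∀ a b : {x : Idn d n // idnJI x ∧ ∃ r : Fin d, x.val r ≠ (r : ℕ) + 1},
        (idnLE a.val b.val ↔ e a ≤ e b) :=
  ⟨closure_convexHull_normalizedValues hm, exists_grid_embedding⟩

/-- for `L = I(d,n)`, `N = d(n−d)` and a maximal chain `C` (through its
order-preserving enumeration `m` of the join-irreducibles), the Newton–Okounkov body
`NO_C = closure (conv (∪_{j ≥ 1} Γ_j / j))` equals `{1} × P`, where `P` is the order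
polytope of the poset `J(L) \ {⊥}` transported by the coordinate identification
`i ↦ m i` (`i = 1, …, N`).  Moreover the poset `J(L) \ {⊥}` is isomorphic to the grid
poset `R_{d,n}`, so `NO_C` is unimodularly equivalent to the Gelfand–Tsetlin polytope
of `Gr_{d,n}`. -/
theorem stmt19 (d n : ℕ) (hd : 0 < d) (hdn : d ≤ n)
    (m : ℕ → Idn d n) (hm : IsEnumI d n (d * (n - d)) m) :
    closure (convexHull ℝ
      {x : ℕ → ℝ | ∃ j : ℕ, 1 ≤ j ∧ ∃ w ∈ Gam d n (d * (n - d)) m j,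
        x = (j : ℝ)⁻¹ • fun i : ℕ => (w i : ℝ)})
      = {x : ℕ → ℝ | x 0 = 1 ∧
          (∀ i : ℕ, 1 ≤ i → i ≤ d * (n - d) → 0 ≤ x i ∧ x i ≤ 1) ∧
          (∀ i j : ℕ, 1 ≤ i → i ≤ d * (n - d) → 1 ≤ j → j ≤ d * (n - d) →
            idnLE (m i) (m j) → x j ≤ x i) ∧
          (∀ i : ℕ, d * (n - d) < i → x i = 0)} ∧
    ∃ e : {x : Idn d n // idnJI x ∧ ∃ r : Fin d, x.val r ≠ (r : ℕ) + 1} → ℕ × ℕ,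
      Function.Injective e ∧ Set.range e = Rset d n ∧
      ∀ a b : {x : Idn d n // idnJI x ∧ ∃ r : Fin d, x.val r ≠ (r : ℕ) + 1},
        (idnLE a.val b.val ↔ e a ≤ e b) :=
  stmt19_general d n m hm
end
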